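/- arXiv:2103.00914 — 9 statements merged into one kernel-verified Lean document; each statement's English description precedes it below -/
import Mathlib

section
/- Let f be an irreducible polynomial over ℚ of prime degree p with splitting field E over ℚ. Then there exists an element σ in the Galois group Gal(E/ℚ) of order exactly p. -/
open Polynomial

/-- An irreducible polynomial over ℚ of prime degree `p` has an element of
order exactly `p` in the Galois group of its splitting field. -/
theorem stmt0 (f : Polynomial ℚ) (p : ℕ) (hp : p.Prime) (hf : Irreducible f)
    (hdeg : f.natDegree = p) :
    ∃ σ : f.Gal, orderOf σ = p := by
  haveI := Fact.mk hp
  have hdvd : p ∣ Fintype.card f.Gal :=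
    by have := Polynomial.Gal.prime_degree_dvd_card hf (hdeg ▸ hp); rw [Nat.card_eq_fintype_card, hdeg] at this; exact this
  exact exists_prime_orderOf_dvd_card p hdvd
end

section
/- Let λ_1, …, λ_n be distinct roots of an irreducible polynomial over ℚ generating a multiplicative group of full rank n−1, and let μ = λ_1^{e_1}⋯λ_n^{e_n} with e_i ∈ ℕ and μ ≠ ±1. Then the subgroup Aut(E/ℚ(μ)) of the Galois group does not act transitively on the roots λ_1, …, λ_n. -/
open Polynomial

/-- Let `lam 1, …, lam n` be the distinct roots of an irreducible polynomial
`f` over ℚ in its splitting field, with product ±1, generating a multiplicative group of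
full rank `n - 1` (every ℤ-relation has all exponents equal). If `μ = ∏ lam i ^ e i` with
`e i ∈ ℕ` and `μ ≠ ±1`, then the subgroup of the Galois group fixing `μ` does not act
transitively on the roots. -/
theorem stmt7 (f : Polynomial ℚ) (hf : Irreducible f) (n : ℕ) (hn : 0 < n)
    (hdeg : f.natDegree = n)
    (lam : Fin n → f.SplittingField) (hinj : Function.Injective lam)
    (hroots : ∀ i, Polynomial.aeval (lam i) f = 0)
    (hprod : (∏ i, lam i) = 1 ∨ (∏ i, lam i) = -1)
    (hfull : ∀ z : Fin n → ℤ, (∏ i, lam i ^ z i) = 1 → ∀ i j, z i = z j)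
    (e : Fin n → ℕ) (μ : f.SplittingField) (hμ : μ = ∏ i, lam i ^ e i)
    (hμ1 : μ ≠ 1) (hμ2 : μ ≠ -1) :
    ¬ (∀ i j : Fin n, ∃ σ : f.Gal, σ μ = μ ∧ σ (lam i) = lam j) := by
  intro htrans
  classical
  have hlamne : ∀ k, lam k ≠ 0 := by
    intro k hk
    have h0 : (∏ i, lam i) = 0 := Finset.prod_eq_zero (Finset.mem_univ k) hk
    rcases hprod with h | h <;> rw [h0] at h <;> simp at h
  have hμne : μ ≠ 0 := by
    rw [hμ]
    exact Finset.prod_ne_zero_iff.mpr fun k _ => pow_ne_zero _ (hlamne k)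
  have hf0 : f ≠ 0 := hf.ne_zero
  set g : Polynomial f.SplittingField := f.map (algebraMap ℚ f.SplittingField) with hgdef
  have hg0 : g ≠ 0 :=
    (Polynomial.map_ne_zero_iff (algebraMap ℚ f.SplittingField).injective).mpr hf0
  have hroots' : ∀ x : f.SplittingField,
      Polynomial.aeval x f = 0 → x ∈ g.roots.toFinset := by
    intro x hx
    rw [Multiset.mem_toFinset, mem_roots hg0]
    rwa [Polynomial.aeval_def, ← Polynomial.eval_map] at hx
  have himg : Finset.image lam Finset.univ = g.roots.toFinset := by
    apply Finset.eq_of_subset_of_card_le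
    · intro x hx
      obtain ⟨k, _, rfl⟩ := Finset.mem_image.mp hx
      exact hroots' _ (hroots k)
    · calc g.roots.toFinset.card ≤ Multiset.card g.roots := Multiset.toFinset_card_le _
        _ ≤ g.natDegree := Polynomial.card_roots' g
        _ = n := by rw [hgdef, Polynomial.natDegree_map, hdeg]
        _ = (Finset.univ.image lam).card := by
            rw [Finset.card_image_of_injective _ hinj, Finset.card_univ, Fintype.card_fin]
  -- key: e is constant
  have key : ∀ i j : Fin n, e i = e j := by
    intro i j
    obtain ⟨σ, hσμ, hσ⟩ := htrans i j
    have hmem : ∀ k, σ (lam k) ∈ Finset.image lam Finset.univ := by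
      intro k
      rw [himg]
      apply hroots'
      have : Polynomial.aeval (σ (lam k)) f = σ (Polynomial.aeval (lam k) f) :=
        Polynomial.aeval_algHom_apply σ.toAlgHom (lam k) f
      rw [this, hroots k, map_zero]
    choose π hπ1 hπ2 using fun k => Finset.mem_image.mp (hmem k)
    have hπinj : Function.Injective π := by
      intro a b hab
      apply hinj
      apply σ.injective
      have h1 := hπ2 a
      rw [hab] at h1
      exact h1.symm.trans (hπ2 b)
    let πe : Equiv.Perm (Fin n) :=
      Equiv.ofBijective π ((Finite.injective_iff_bijective).mp hπinj)
    have hπe : ∀ k, πe k = π k := fun k => rfl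
    have hμσ : μ = ∏ k, lam (π k) ^ e k := by
      conv_lhs => rw [← hσμ, hμ]
      rw [map_prod]
      exact Finset.prod_congr rfl fun k _ => by rw [map_pow, ← hπ2 k]
    have hre : (∏ k, lam (π k) ^ e k) = ∏ k, lam k ^ e (πe.symm k) := by
      rw [← Equiv.prod_comp πe (fun k => lam k ^ e (πe.symm k))]
      refine Finset.prod_congr rfl fun k _ => ?_
      rw [Equiv.symm_apply_apply]
      rfl
    set z : Fin n → ℤ := fun k => (e k : ℤ) - (e (πe.symm k) : ℤ) with hzdef
    have hz1 : (∏ k, lam k ^ z k) = 1 := by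
      have hA : (∏ k, lam k ^ ((e k : ℤ))) = μ := by
        rw [hμ]; exact Finset.prod_congr rfl fun k _ => zpow_natCast _ _
      have hB : (∏ k, lam k ^ ((e (πe.symm k) : ℤ))) = μ := by
        rw [hμσ, hre]
        refine Finset.prod_congr rfl fun k _ => ?_
        exact zpow_natCast _ _
      calc (∏ k, lam k ^ z k)
          = ∏ k, lam k ^ ((e k : ℤ)) / lam k ^ ((e (πe.symm k) : ℤ)) :=
            Finset.prod_congr rfl fun k _ => zpow_sub₀ (hlamne k) _ _
        _ = (∏ k, lam k ^ ((e k : ℤ))) / ∏ k, lam k ^ ((e (πe.symm k) : ℤ)) :=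
            Finset.prod_div_distrib _ _
        _ = μ / μ := by rw [hA, hB]
        _ = 1 := div_self hμne
    have hall := hfull z hz1
    have hsum : (∑ k, z k) = 0 := by
      rw [hzdef]
      rw [Finset.sum_sub_distrib]
      rw [Equiv.sum_comp πe.symm (fun k => (e k : ℤ))]
      exact sub_self _
    have hz0 : ∀ k, z k = 0 := by
      intro k
      have hnk : (∑ l, z l) = n * z k := by
        rw [Finset.sum_congr rfl fun l _ => hall l k]
        simp [Finset.card_univ, mul_comm]
      have : (n : ℤ) * z k = 0 := by rw [← hnk, hsum]
      rcases mul_eq_zero.mp this with h | h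
      · exact absurd h (by exact_mod_cast hn.ne')
      · exact h
    have hπij : πe i = j := by
      apply hinj
      rw [hπe, hπ2 i, hσ]
    have hsymm : πe.symm j = i := by rw [← hπij, Equiv.symm_apply_apply]
    have := hz0 j
    rw [hzdef] at this
    simp only [hsymm] at this
    have : (e j : ℤ) = (e i : ℤ) := by linarith
    exact_mod_cast this.symm
  -- e is constant, so μ = (∏ lam)^c = ±1
  have hconst : ∀ k, e k = e ⟨0, hn⟩ := fun k => key k ⟨0, hn⟩
  have hμc : μ = (∏ k, lam k) ^ e ⟨0, hn⟩ := by
    rw [hμ, ← Finset.prod_pow]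
    exact Finset.prod_congr rfl fun k _ => by rw [hconst k]
  rcases hprod with h | h
  · rw [h, one_pow] at hμc; exact hμ1 hμc
  · rw [h] at hμc
    rcases neg_one_pow_eq_or f.SplittingField (e ⟨0, hn⟩) with h' | h'
    · exact hμ1 (hμc.trans h')
    · exact hμ2 (hμc.trans h')
end

section
/- Let g be an irreducible monic integer polynomial with constant term ±1, no roots of absolute value 1, and whose roots generate a multiplicative group of rank 1. If λ and μ are two roots of g and e, f are nonzero integers with λ^e = μ^f, then e = ±f. -/
open Polynomial

/-! If `σ` is a field automorphism of finite order `n` with `σ λ = μ`, then applying `σ` repeatedly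
to `λ ^ e = μ ^ f` gives `λ ^ (e ^ n) = (σ^[n] λ) ^ (f ^ n) = λ ^ (f ^ n)`. Such a `σ` exists on
the splitting field of `g` inside `ℂ`, because `λ` and `μ` are conjugate. As `λ` is neither `0`
nor of absolute value `1`, taking absolute values gives `e ^ n = f ^ n`, hence `e = ±f`. -/

theorem zpow_pow_eq_iterate_zpow_pow {G₀ N : Type*} [GroupWithZero G₀] [FunLike N G₀ G₀]
    [MonoidWithZeroHomClass N G₀ G₀] (σ : N) {e f : ℤ} {x : G₀} (h : x ^ e = σ x ^ f) (n : ℕ) :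
    x ^ e ^ n = (σ^[n] x) ^ f ^ n := by
  induction n generalizing x with
  | zero => simp
  | succ n ih =>
    have hσ : σ x ^ e = σ (σ x) ^ f := by rw [← map_zpow₀, h, map_zpow₀]
    rw [pow_succ', pow_succ', zpow_mul, h, ← zpow_mul, mul_comm, zpow_mul, ih hσ,
      Function.iterate_succ_apply, ← zpow_mul, mul_comm]

theorem eq_of_zpow_eq_zpow_of_norm_ne_one {𝕜 : Type*} [NormedDivisionRing 𝕜] {x : 𝕜}
    (hx₀ : x ≠ 0) (hx₁ : ‖x‖ ≠ 1) {a b : ℤ} (h : x ^ a = x ^ b) : a = b := by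
  have := congrArg norm h
  rwa [norm_zpow, norm_zpow, zpow_right_inj₀ (norm_pos_iff.mpr hx₀) hx₁] at this

theorem Normal.exists_zpow_pow_eq_of_minpoly_eq {F K : Type*} [Field F] [Field K] [Algebra F K]
    [Normal F K] [FiniteDimensional F K] {x y : K} (hxy : minpoly F x = minpoly F y)
    {e f : ℤ} (h : x ^ e = y ^ f) : ∃ n ≠ 0, x ^ e ^ n = x ^ f ^ n := by
  obtain ⟨σ, hσ⟩ := (Normal.minpoly_eq_iff_mem_orbit K).mp hxy.symm
  refine ⟨orderOf σ, (isOfFinOrder_of_finite σ).orderOf_pos.ne', ?_⟩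
  have hσ' : σ x = y := hσ
  rw [zpow_pow_eq_iterate_zpow_pow σ (hσ' ▸ h), ← AlgEquiv.coe_pow, pow_orderOf_eq_one,
    AlgEquiv.one_apply]

theorem exists_zpow_pow_eq_of_aeval_eq_zero {F L : Type*} [Field F] [Field L] [Algebra F L]
    {p : F[X]} (hp : Irreducible p) (hsplit : (p.map (algebraMap F L)).Splits) {x y : L}
    (hx : aeval x p = 0) (hy : aeval y p = 0) {e f : ℤ} (h : x ^ e = y ^ f) :
    ∃ n ≠ 0, x ^ e ^ n = x ^ f ^ n := by
  let K := IntermediateField.adjoin F (p.rootSet L)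
  have : IsSplittingField F K p := IntermediateField.adjoin_rootSet_isSplittingField hsplit
  have : Normal F K := Normal.of_isSplittingField p
  have : FiniteDimensional F K := IsSplittingField.finiteDimensional K p
  have hmem {z : L} (hz : aeval z p = 0) : z ∈ K :=
    IntermediateField.subset_adjoin F _ (mem_rootSet.mpr ⟨hp.ne_zero, hz⟩)
  obtain ⟨n, hn, hK⟩ := Normal.exists_zpow_pow_eq_of_minpoly_eq
    (x := ⟨x, hmem hx⟩) (y := ⟨y, hmem hy⟩) (e := e) (f := f)
    (by rw [IntermediateField.minpoly_eq, IntermediateField.minpoly_eq,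
      ← minpoly.eq_of_irreducible hp hx, ← minpoly.eq_of_irreducible hp hy])
    ((algebraMap K L).injective <| by
      simpa only [map_zpow₀, IntermediateField.algebraMap_apply] using h)
  exact ⟨n, hn, by
    simpa only [map_zpow₀, IntermediateField.algebraMap_apply] using congrArg (algebraMap K L) hK⟩

theorem stmt9_general (g : Polynomial ℤ)
    (hirr : Irreducible (g.map (Int.castRingHom ℚ)))
    (hconst : g.coeff 0 = 1 ∨ g.coeff 0 = -1)
    (hhyp : ∀ z ∈ (g.map (Int.castRingHom ℂ)).roots, ‖z‖ ≠ 1)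
    (lam μ : ℂ) (hlam : lam ∈ (g.map (Int.castRingHom ℂ)).roots)
    (hμ : μ ∈ (g.map (Int.castRingHom ℂ)).roots)
    (e f : ℤ) (heq : lam ^ e = μ ^ f) :
    e = f ∨ e = -f := by
  have hroot {z : ℂ} (hz : z ∈ (g.map (Int.castRingHom ℂ)).roots) :
      aeval z (g.map (Int.castRingHom ℚ)) = 0 := by
    have := (isRoot_of_mem_roots hz).eq_zero
    rwa [← algebraMap_int_eq, eval_map_algebraMap, ← aeval_map_algebraMap ℚ, algebraMap_int_eq]
      at this
  have hlam₀ : lam ≠ 0 := by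
    rintro rfl
    have := (isRoot_of_mem_roots hlam).eq_zero
    rw [← coeff_zero_eq_eval_zero, coeff_map] at this
    rcases hconst with h | h <;> simp [h] at this
  obtain ⟨n, hn, hpow⟩ :=
    exists_zpow_pow_eq_of_aeval_eq_zero hirr (IsAlgClosed.splits _) (hroot hlam) (hroot hμ) heq
  have hef := eq_of_zpow_eq_zpow_of_norm_ne_one hlam₀ (hhyp lam hlam) hpow
  rcases (pow_eq_pow_iff_of_ne_zero hn).mp hef with h | ⟨h, -⟩
  exacts [.inl h, .inr h]

/-- Let `g` be an irreducible monic integer polynomial with constant term ±1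
and no roots of absolute value 1, whose roots generate a multiplicative group of rank 1
(it contains an element of infinite order, and any two elements are ℤ-dependent). If `lam`
and `μ` are roots of `g` and `e, f` are nonzero integers with `lam ^ e = μ ^ f`, then
`e = ±f`. -/
theorem stmt9 (g : Polynomial ℤ) (hg : g.Monic)
    (hirr : Irreducible (g.map (Int.castRingHom ℚ)))
    (hconst : g.coeff 0 = 1 ∨ g.coeff 0 = -1)
    (hhyp : ∀ z ∈ (g.map (Int.castRingHom ℂ)).roots, ‖z‖ ≠ 1)
    (hrank_ge : ∃ x : ℂˣ,
      x ∈ Subgroup.closure {u : ℂˣ | (u : ℂ) ∈ (g.map (Int.castRingHom ℂ)).roots} ∧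
      ¬ IsOfFinOrder x)
    (hrank_le : ∀ x y : ℂˣ,
      x ∈ Subgroup.closure {u : ℂˣ | (u : ℂ) ∈ (g.map (Int.castRingHom ℂ)).roots} →
      y ∈ Subgroup.closure {u : ℂˣ | (u : ℂ) ∈ (g.map (Int.castRingHom ℂ)).roots} →
      ∃ p q : ℤ, (p ≠ 0 ∨ q ≠ 0) ∧ x ^ p * y ^ q = 1)
    (lam μ : ℂ) (hlam : lam ∈ (g.map (Int.castRingHom ℂ)).roots)
    (hμ : μ ∈ (g.map (Int.castRingHom ℂ)).roots)
    (e f : ℤ) (he : e ≠ 0) (hf : f ≠ 0) (heq : lam ^ e = μ ^ f) :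
    e = f ∨ e = -f :=
  stmt9_general g hirr hconst hhyp lam μ hlam hμ e f heq
end

section
/- Let g be an irreducible monic integer polynomial with constant term ±1 and no roots of absolute value 1, whose roots generate a multiplicative group of rank 1. Then there exists a positive integer m such that for any two roots λ, μ of g, μ^m ∈ {λ^m, λ^{−m}}; consequently the polynomial whose roots are the m-th powers of the roots of g is a power of a degree-2 Anosov polynomial. -/
open Polynomial

-- auxiliary: positive real ≠ 1, zpow = 1 → exponent 0
lemma aux_zpow_eq_one {r : ℝ} (h0 : 0 < r) (h1 : r ≠ 1) {c : ℤ} (h : r ^ c = 1) : c = 0 := by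
  have hlog : (c : ℝ) * Real.log r = 0 := by
    rw [← Real.log_zpow, h, Real.log_one]
  have hr : Real.log r ≠ 0 := by
    intro h'
    rcases Real.log_eq_zero.mp h' with h'' | h'' | h'' <;> [exact h0.ne' h''; exact h1 h''; nlinarith]
  rcases mul_eq_zero.mp hlog with h' | h'
  · exact_mod_cast h'
  · exact absurd h' hr

lemma aux_zpow_inj {r : ℝ} (h0 : 0 < r) (h1 : r ≠ 1) {a b : ℤ} (h : r ^ a = r ^ b) : a = b := by
  have : r ^ (a - b) = 1 := by
    rw [zpow_sub₀ h0.ne', h, div_self (zpow_ne_zero _ h0.ne')]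
  have := aux_zpow_eq_one h0 h1 this
  omega

section S1
open Polynomial

variable {K : Type} [Field K] [Algebra ℚ K]

lemma aux_rel (gK : K[X]) (iR : K →+* ℂ) (gC : ℂ[X])
  (hroots : gC.roots = gK.roots.map iR)
  (habs : ∀ z ∈ gC.roots, z ≠ 0 ∧ ‖z‖ ≠ 1)
  (hrank_le : ∀ x y : ℂˣ,
      x ∈ Subgroup.closure {u : ℂˣ | (u : ℂ) ∈ gC.roots} →
      y ∈ Subgroup.closure {u : ℂˣ | (u : ℂ) ∈ gC.roots} →
      ∃ p q : ℤ, (p ≠ 0 ∨ q ≠ 0) ∧ x ^ p * y ^ q = 1) : ∀ lam ∈ gK.roots, ∀ μ ∈ gK.roots,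
    ∃ a : ℕ, 0 < a ∧ ∃ b : ℤ, μ ^ (a : ℤ) = lam ^ b := by
  classical
  intro lam hlam μ hμ
  have hlamC : iR lam ∈ gC.roots := by rw [hroots]; exact Multiset.mem_map_of_mem _ hlam
  have hμC : iR μ ∈ gC.roots := by rw [hroots]; exact Multiset.mem_map_of_mem _ hμ
  obtain ⟨hlam0, hlam1⟩ := habs _ hlamC
  obtain ⟨hμ0, hμ1⟩ := habs _ hμC
  set x : ℂˣ := Units.mk0 _ hlam0 with hx
  set y : ℂˣ := Units.mk0 _ hμ0 with hy
  have hxmem : x ∈ Subgroup.closure {u : ℂˣ | (u : ℂ) ∈ gC.roots} :=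
    Subgroup.subset_closure (by simpa [hx] using hlamC)
  have hymem : y ∈ Subgroup.closure {u : ℂˣ | (u : ℂ) ∈ gC.roots} :=
    Subgroup.subset_closure (by simpa [hy] using hμC)
  obtain ⟨p, q, hpq, hrel⟩ := hrank_le x y hxmem hymem
  -- get relation in ℂ
  have hrelC : (iR lam) ^ p * (iR μ) ^ q = 1 := by
    have := congrArg (Units.val) hrel
    simpa [hx, hy] using this
  have habspos : 0 < ‖iR lam‖ := norm_pos_iff.mpr hlam0
  have habsposμ : 0 < ‖iR μ‖ := norm_pos_iff.mpr hμ0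
  have hq0 : q ≠ 0 := by
    intro hq
    subst hq
    have : (iR lam) ^ p = 1 := by simpa using hrelC
    have habs1 : ‖iR lam‖ ^ p = 1 := by
      rw [← norm_zpow, this, norm_one]
    have hp0 : p = 0 := aux_zpow_eq_one habspos hlam1 habs1
    rcases hpq with h | h
    · exact h hp0
    · exact h rfl
  -- relation in K
  have hrelK : lam ^ p * μ ^ q = 1 := by
    have : iR (lam ^ p * μ ^ q) = iR 1 := by
      rw [map_one, map_mul, map_zpow₀, map_zpow₀]; exact hrelC
    exact iR.injective this
  have hμq : μ ^ q = lam ^ (-p) := by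
    rw [zpow_neg]
    exact eq_inv_of_mul_eq_one_right hrelK
  rcases Int.natAbs_eq q with hq | hq
  · refine ⟨q.natAbs, by omega, -p, ?_⟩
    rw [← hμq]; congr 1; omega
  · refine ⟨q.natAbs, by omega, p, ?_⟩
    have : μ ^ (-(q.natAbs : ℤ)) = lam ^ (-p) := by rw [← hq]; exact hμq
    rw [zpow_neg, zpow_neg] at this
    rw [← inv_inv (lam ^ p), ← this, inv_inv]

end S1

section S2
open Polynomial
variable {K : Type} [Field K] [Algebra ℚ K]

lemma aux_core [FiniteDimensional ℚ K] (gK : K[X]) (iR : K →+* ℂ)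
  (lam0 : K) (hlam0 : lam0 ∈ gK.roots)
  (hrel : ∀ lam ∈ gK.roots, ∀ μ ∈ gK.roots,
    ∃ a : ℕ, 0 < a ∧ ∃ b : ℤ, μ ^ (a : ℤ) = lam ^ b)
  (habs0 : 0 < ‖iR lam0‖) (habs1 : ‖iR lam0‖ ≠ 1)
  (hσroot : ∀ (σ : K ≃ₐ[ℚ] K), ∀ μ ∈ gK.roots, σ μ ∈ gK.roots)
  (htrans : ∀ μ ∈ gK.roots, ∃ σ : K ≃ₐ[ℚ] K, σ lam0 = μ) : ∃ m : ℕ, 0 < m ∧ ∀ μ ∈ gK.roots,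
    μ ^ (m : ℤ) = lam0 ^ (m : ℤ) ∨ μ ^ (m : ℤ) = lam0 ^ (-(m : ℤ)) := by
  classical
  -- uniqueness of exponents
  have uniq : ∀ a b : ℤ, lam0 ^ a = lam0 ^ b → a = b := by
    intro a b h
    refine aux_zpow_inj habs0 habs1 ?_
    rw [← norm_zpow, ← norm_zpow, ← map_zpow₀ iR, ← map_zpow₀ iR, h]
  -- exponent function a on roots w.r.t. lam0
  set A : K → ℕ := fun μ => if h : μ ∈ gK.roots then (hrel lam0 hlam0 μ h).choose else 1 with hA
  have hApos : ∀ μ, 0 < A μ := by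
    intro μ
    by_cases h : μ ∈ gK.roots
    · simp only [hA, dif_pos h]; exact (hrel lam0 hlam0 μ h).choose_spec.1
    · simp only [hA]; rw [dif_neg h]; exact one_pos
  have hAspec : ∀ μ (h : μ ∈ gK.roots), ∃ b : ℤ, μ ^ (A μ : ℤ) = lam0 ^ b := by
    intro μ h
    simp only [hA, dif_pos h]
    exact (hrel lam0 hlam0 μ h).choose_spec.2
  set m : ℕ := ∏ μ ∈ gK.roots.toFinset, A μ with hm
  have hmpos : 0 < m := Finset.prod_pos fun μ _ => hApos μ
  -- every root to the m-th power is an integer power of lam0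
  have hT : ∀ μ ∈ gK.roots, ∃ t : ℤ, μ ^ (m : ℤ) = lam0 ^ t := by
    intro μ h
    obtain ⟨b, hb⟩ := hAspec μ h
    obtain ⟨c, hc⟩ := Finset.dvd_prod_of_mem A (Multiset.mem_toFinset.mpr h)
    refine ⟨b * c, ?_⟩
    rw [← hm] at hc
    rw [hc]
    push_cast
    rw [zpow_mul, hb, ← zpow_mul]
  set T : K → ℤ := fun μ => if h : μ ∈ gK.roots then (hT μ h).choose else 0 with hTdef
  have hTspec : ∀ μ (h : μ ∈ gK.roots), μ ^ (m : ℤ) = lam0 ^ (T μ) := by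
    intro μ h
    simp only [hTdef, dif_pos h]
    exact (hT μ h).choose_spec
  have hT0 : T lam0 = (m : ℤ) := (uniq _ _ (hTspec lam0 hlam0).symm)
  -- equivariance
  have hequiv : ∀ (σ : K ≃ₐ[ℚ] K), ∀ μ ∈ gK.roots,
      T (σ μ) * (m : ℤ) = T (σ lam0) * T μ := by
    intro σ μ hμ
    have h1 : (σ μ) ^ (m : ℤ) = (σ lam0) ^ (T μ) := by
      have := congrArg σ (hTspec μ hμ)
      simpa [map_zpow₀] using this
    have h2 : (σ lam0) ^ (m : ℤ) = lam0 ^ (T (σ lam0)) := hTspec _ (hσroot σ lam0 hlam0)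
    have h3 : (σ μ) ^ (m : ℤ) = lam0 ^ (T (σ μ)) := hTspec _ (hσroot σ μ hμ)
    apply uniq
    calc lam0 ^ (T (σ μ) * (m : ℤ)) = ((σ μ) ^ (m : ℤ)) ^ (m : ℤ) := by
          rw [h3, ← zpow_mul, mul_comm]
      _ = ((σ lam0) ^ (T μ)) ^ (m : ℤ) := by rw [h1]
      _ = ((σ lam0) ^ (m : ℤ)) ^ (T μ) := by rw [← zpow_mul, ← zpow_mul, mul_comm]
      _ = lam0 ^ (T (σ lam0) * T μ) := by rw [h2, ← zpow_mul]
  have hrootk : ∀ (σ : K ≃ₐ[ℚ] K) (k : ℕ), (σ ^ k) lam0 ∈ gK.roots := by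
    intro σ k
    induction k with
    | zero => simpa using hlam0
    | succ k ih =>
      have h2 : (σ ^ (k+1)) lam0 = σ ((σ ^ k) lam0) := by rw [pow_succ']; rfl
      rw [h2]; exact hσroot σ _ ih
  -- iterate
  have hiter : ∀ (σ : K ≃ₐ[ℚ] K) (k : ℕ),
      T ((σ ^ k) lam0) * (m : ℤ) ^ k = (T (σ lam0)) ^ k * (m : ℤ) := by
    intro σ k
    induction k with
    | zero => simpa using hT0
    | succ k ih =>
      have hroot : (σ ^ k) lam0 ∈ gK.roots := hrootk σ k
      have h1 := hequiv σ ((σ ^ k) lam0) hroot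
      have h2 : (σ ^ (k+1)) lam0 = σ ((σ ^ k) lam0) := by rw [pow_succ']; rfl
      rw [h2]
      calc T (σ ((σ ^ k) lam0)) * (m : ℤ) ^ (k + 1)
          = (T (σ ((σ ^ k) lam0)) * (m : ℤ)) * (m : ℤ) ^ k := by ring
        _ = (T (σ lam0) * T ((σ ^ k) lam0)) * (m : ℤ) ^ k := by rw [h1]
        _ = T (σ lam0) * (T ((σ ^ k) lam0) * (m : ℤ) ^ k) := by ring
        _ = T (σ lam0) * ((T (σ lam0)) ^ k * (m : ℤ)) := by rw [ih]
        _ = (T (σ lam0)) ^ (k + 1) * (m : ℤ) := by ring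
  -- T values are ±m
  have hpm : ∀ μ ∈ gK.roots, T μ = (m : ℤ) ∨ T μ = -(m : ℤ) := by
    intro μ hμ
    obtain ⟨σ, hσ⟩ := htrans μ hμ
    have hd : 0 < orderOf σ := orderOf_pos σ
    have := hiter σ (orderOf σ)
    rw [pow_orderOf_eq_one σ] at this
    simp only [AlgEquiv.one_apply] at this
    rw [hT0] at this
    -- (m:ℤ) * m^d = c^d * m  where c = T (σ lam0) = T μ
    have hceq : (T (σ lam0)) ^ (orderOf σ) = (m : ℤ) ^ (orderOf σ) := by
      have hmne : (m : ℤ) ≠ 0 := by exact_mod_cast hmpos.ne'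
      have : (m : ℤ) ^ (orderOf σ) * (m : ℤ) = (T (σ lam0)) ^ (orderOf σ) * (m : ℤ) := by
        rw [← this]; ring
      exact (mul_right_cancel₀ hmne this).symm
    have hnat : (T (σ lam0)).natAbs ^ (orderOf σ) = m ^ (orderOf σ) := by
      have := congrArg Int.natAbs hceq
      simpa [Int.natAbs_pow] using this
    have habseq : (T (σ lam0)).natAbs = m :=
      Nat.pow_left_injective (by omega) hnat
    rw [← hσ]
    rcases Int.natAbs_eq (T (σ lam0)) with h | h
    · left; rw [h, habseq]
    · right; rw [h, habseq]
  refine ⟨m, hmpos, fun μ hμ => ?_⟩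
  rcases hpm μ hμ with h | h
  · left; rw [hTspec μ hμ, h]
  · right; rw [hTspec μ hμ, h]

end S2

section S3
open Polynomial
lemma aux_galois (gQ : ℚ[X]) (hirr : Irreducible gQ) (hQmonic : gQ.Monic) : (∀ (σ : gQ.SplittingField ≃ₐ[ℚ] gQ.SplittingField),
      ∀ μ ∈ (gQ.map (algebraMap ℚ gQ.SplittingField)).roots,
        σ μ ∈ (gQ.map (algebraMap ℚ gQ.SplittingField)).roots) ∧
    (∀ lam0 ∈ (gQ.map (algebraMap ℚ gQ.SplittingField)).roots,
      ∀ μ ∈ (gQ.map (algebraMap ℚ gQ.SplittingField)).roots,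
        ∃ σ : gQ.SplittingField ≃ₐ[ℚ] gQ.SplittingField, σ lam0 = μ) := by
  set K := gQ.SplittingField
  have hgK0 : gQ.map (algebraMap ℚ K) ≠ 0 :=
    (hQmonic.map (algebraMap ℚ K)).ne_zero
  have hmem : ∀ μ : K, μ ∈ (gQ.map (algebraMap ℚ K)).roots ↔ aeval μ gQ = 0 := by
    intro μ
    rw [mem_roots hgK0, IsRoot.def, eval_map, ← aeval_def]
  constructor
  · intro σ μ hμ
    rw [hmem] at hμ ⊢
    rw [show σ μ = σ.toAlgHom μ from rfl, Polynomial.aeval_algHom_apply, hμ, map_zero]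
  · intro lam0 hlam0 μ hμ
    rw [hmem] at hlam0 hμ
    have hmin : minpoly ℚ lam0 = gQ := by
      have := minpoly.eq_of_irreducible_of_monic hirr hlam0 hQmonic
      exact this.symm
    have halg : IsAlgebraic ℚ lam0 := (Algebra.IsAlgebraic.isAlgebraic lam0)
    have : aeval μ (minpoly ℚ lam0) = 0 := by rw [hmin]; exact hμ
    haveI hN : Normal ℚ gQ.SplittingField := Polynomial.SplittingField.instNormal gQ
    exact minpoly.exists_algEquiv_of_root' halg this

end S3

section S4
open Polynomial
lemma aux_rat (gQ : ℚ[X]) (sK : gQ.SplittingField)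
    (hfix : ∀ σ : gQ.SplittingField ≃ₐ[ℚ] gQ.SplittingField, σ sK = sK) :
    ∃ r : ℚ, algebraMap ℚ gQ.SplittingField r = sK := by
  haveI : Normal ℚ gQ.SplittingField := Polynomial.SplittingField.instNormal gQ
  haveI : IsGalois ℚ gQ.SplittingField := ⟨⟩
  have hbot : IntermediateField.fixedField (⊤ : Subgroup (gQ.SplittingField ≃ₐ[ℚ] gQ.SplittingField)) = ⊥ :=
    (IsGalois.tfae.out 0 1).mp (inferInstance : IsGalois ℚ gQ.SplittingField)
  have hmem : sK ∈ IntermediateField.fixedField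
      (⊤ : Subgroup (gQ.SplittingField ≃ₐ[ℚ] gQ.SplittingField)) := by
    rw [show (IntermediateField.fixedField (⊤ : Subgroup (gQ.SplittingField ≃ₐ[ℚ] gQ.SplittingField))) = FixedPoints.intermediateField _ from rfl]
    intro σ
    exact hfix σ.1
  rw [hbot, IntermediateField.mem_bot] at hmem
  exact hmem

end S4

section S5
open Polynomial
lemma aux_part2 (gC : ℂ[X]) (m : ℕ) (A : ℂ) (hmono : gC.Monic) (hsp : gC.Splits)
    (hm : 0 < m) (hA0 : A ≠ 0) (hAabs : ‖A‖ ≠ 1)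
    (hkey : ∀ z ∈ gC.roots, z ^ m = A ∨ z ^ m = A⁻¹)
    (hdeg : 1 ≤ gC.roots.card)
    (habs_c0 : ‖gC.coeff 0‖ = 1)
    (hint : ∀ z ∈ gC.roots, IsIntegral ℤ z)
    (hrat : ∃ r : ℚ, A + A⁻¹ = ((r : ℚ) : ℂ)) :
    ∃ q : Polynomial ℤ, q.Monic ∧ q.natDegree = 2 ∧
        (q.coeff 0 = 1 ∨ q.coeff 0 = -1) ∧
        (∀ z ∈ (q.map (Int.castRingHom ℂ)).roots, ‖z‖ ≠ 1) ∧
        ∃ j : ℕ,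
          ((gC.roots).map (fun z => Polynomial.X - Polynomial.C (z ^ m))).prod
            = (q.map (Int.castRingHom ℂ)) ^ j := by
  classical
  have hrA : 0 < ‖A‖ := norm_pos_iff.mpr hA0
  set M : Multiset ℂ := gC.roots.map (fun z => z ^ m) with hM
  have hMmem : ∀ w ∈ M, w = A ∨ w = A⁻¹ := by
    intro w hw
    obtain ⟨z, hz, rfl⟩ := Multiset.mem_map.mp hw
    exact hkey z hz
  set j : ℕ := M.count A with hj
  set Mrest : Multiset ℂ := M.filter (fun w => ¬ w = A) with hMrest
  set k : ℕ := Mrest.card with hk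
  have hMdec : M = Multiset.replicate j A + Multiset.replicate k A⁻¹ := by
    have h1 : M.filter (fun w => w = A) = Multiset.replicate j A := by
      rw [hj]; exact Multiset.filter_eq' M A
    have h2 : Mrest = Multiset.replicate k A⁻¹ := by
      rw [Multiset.eq_replicate]
      refine ⟨rfl, fun w hw => ?_⟩
      have hw' := Multiset.mem_filter.mp hw
      rcases hMmem w hw'.1 with h | h
      · exact absurd h hw'.2
      · exact h
    rw [← h1, ← h2]
    exact (Multiset.filter_add_not _ M).symm
  have hcardM : M.card = j + k := by
    rw [hMdec]; simp
  -- product of M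
  have hprodM : M.prod = gC.roots.prod ^ m := by
    rw [hM]
    exact Multiset.prod_map_pow.trans (by rw [Multiset.map_id'])
  have habs_prod : ‖gC.roots.prod‖ = 1 := by
    have := hsp.coeff_zero_eq_prod_roots_of_monic hmono
    have h2 := congrArg norm this
    simpa [habs_c0] using h2.symm
  have habsM : ‖M.prod‖ = 1 := by
    rw [hprodM, norm_pow, habs_prod, one_pow]
  have hjk : j = k := by
    rw [hMdec, Multiset.prod_add, Multiset.prod_replicate, Multiset.prod_replicate] at habsM
    rw [norm_mul, norm_pow, norm_pow, norm_inv] at habsM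
    have h1 : ‖A‖ ^ j = ‖A‖ ^ k := by
      have hk0 : (‖A‖)⁻¹ ^ k = (‖A‖ ^ k)⁻¹ := by
        rw [inv_pow]
      rw [hk0, ← div_eq_mul_inv] at habsM
      exact (div_eq_one_iff_eq (pow_ne_zero _ hrA.ne')).mp habsM
    have h2 : ‖A‖ ^ (j : ℤ) = ‖A‖ ^ (k : ℤ) := by
      rw [zpow_natCast, zpow_natCast]; exact h1
    exact_mod_cast aux_zpow_inj hrA hAabs h2
  have hjpos : 0 < j := by
    have : M.card = gC.roots.card := by rw [hM]; simp
    omega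
  -- integrality of A and A⁻¹
  have hintA : IsIntegral ℤ A := by
    have : A ∈ M := by rw [hMdec]; exact Multiset.mem_add.mpr (Or.inl (Multiset.mem_replicate.mpr ⟨by omega, rfl⟩))
    obtain ⟨z, hz, hzA⟩ := Multiset.mem_map.mp this
    rw [← hzA]
    exact (hint z hz).pow m
  have hintAinv : IsIntegral ℤ A⁻¹ := by
    have : A⁻¹ ∈ M := by
      rw [hMdec]
      exact Multiset.mem_add.mpr (Or.inr (Multiset.mem_replicate.mpr ⟨by omega, rfl⟩))
    obtain ⟨z, hz, hzA⟩ := Multiset.mem_map.mp this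
    rw [← hzA]
    exact (hint z hz).pow m
  -- A + A⁻¹ is an integer
  obtain ⟨r, hr⟩ := hrat
  have hint_s : IsIntegral ℤ ((r : ℚ) : ℂ) := by rw [← hr]; exact hintA.add hintAinv
  have hint_r : IsIntegral ℤ (r : ℚ) := by
    have : Function.Injective (algebraMap ℚ ℂ) := (algebraMap ℚ ℂ).injective
    rw [show ((r : ℚ) : ℂ) = algebraMap ℚ ℂ r by norm_num] at hint_s
    exact isIntegral_algebraMap_iff this |>.mp hint_s
  obtain ⟨b, hb⟩ := IsIntegrallyClosed.isIntegral_iff.mp hint_r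
  have hbC : A + A⁻¹ = ((b : ℤ) : ℂ) := by
    rw [hr, ← hb]
    norm_num
  -- the quadratic polynomial
  refine ⟨X ^ 2 - C b * X + 1, ?_, ?_, ?_, ?_, ?_⟩
  · monicity!
  · compute_degree!
  · left
    simp [coeff_one]
  · intro z hz
    have hfact : (X ^ 2 - C b * X + 1 : ℤ[X]).map (Int.castRingHom ℂ)
        = (X - C A) * (X - C A⁻¹) := by
      have h1 : A * A⁻¹ = 1 := mul_inv_cancel₀ hA0
      have : ((X ^ 2 - C b * X + 1 : ℤ[X]).map (Int.castRingHom ℂ))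
          = X ^ 2 - C ((b : ℤ) : ℂ) * X + 1 := by
        simp [Polynomial.map_add, Polynomial.map_sub, Polynomial.map_pow, Polynomial.map_mul]
      rw [this, ← hbC, map_add]
      have h2 : (1 : ℂ[X]) = C A * C A⁻¹ := by rw [← map_mul, h1, map_one]
      rw [h2]
      ring
    rw [hfact] at hz
    have hne : (X - C A : ℂ[X]) * (X - C A⁻¹) ≠ 0 :=
      mul_ne_zero (X_sub_C_ne_zero A) (X_sub_C_ne_zero A⁻¹)
    rw [roots_mul hne, roots_X_sub_C, roots_X_sub_C] at hz
    rcases Multiset.mem_add.mp hz with h | h <;> rw [Multiset.mem_singleton.mp h]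
    · exact hAabs
    · rw [norm_inv]
      intro hcon
      exact hAabs (by rw [← inv_inv (‖A‖), hcon]; norm_num)
  · refine ⟨j, ?_⟩
    have hfact : (X ^ 2 - C b * X + 1 : ℤ[X]).map (Int.castRingHom ℂ)
        = (X - C A) * (X - C A⁻¹) := by
      have h1 : A * A⁻¹ = 1 := mul_inv_cancel₀ hA0
      have : ((X ^ 2 - C b * X + 1 : ℤ[X]).map (Int.castRingHom ℂ))
          = X ^ 2 - C ((b : ℤ) : ℂ) * X + 1 := by
        simp [Polynomial.map_add, Polynomial.map_sub, Polynomial.map_pow, Polynomial.map_mul]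
      rw [this, ← hbC, map_add]
      have h2 : (1 : ℂ[X]) = C A * C A⁻¹ := by rw [← map_mul, h1, map_one]
      rw [h2]
      ring
    have hmapmap : (gC.roots.map (fun z => X - C (z ^ m))) = M.map (fun w => X - C w) := by
      rw [hM, Multiset.map_map]
      rfl
    rw [hmapmap, hMdec, Multiset.map_add, Multiset.prod_add, Multiset.map_replicate,
      Multiset.map_replicate, Multiset.prod_replicate, Multiset.prod_replicate, ← hjk, hfact,
      mul_pow]

end S5
/-- Let `g` be an irreducible monic integer polynomial with constant term ±1
and no roots of absolute value 1, whose roots generate a multiplicative group of rank 1.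
Then there is a positive integer `m` such that for any two roots `lam, μ` of `g` one has
`μ^m ∈ {lam^m, lam^{-m}}`; consequently the polynomial whose roots are the `m`-th powers of
the roots of `g` is a power of a degree-2 Anosov polynomial. -/
theorem stmt10 (g : Polynomial ℤ) (hg : g.Monic)
    (hirr : Irreducible (g.map (Int.castRingHom ℚ)))
    (hconst : g.coeff 0 = 1 ∨ g.coeff 0 = -1)
    (hhyp : ∀ z ∈ (g.map (Int.castRingHom ℂ)).roots, ‖z‖ ≠ 1)
    (hrank_ge : ∃ x : ℂˣ,
      x ∈ Subgroup.closure {u : ℂˣ | (u : ℂ) ∈ (g.map (Int.castRingHom ℂ)).roots} ∧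
      ¬ IsOfFinOrder x)
    (hrank_le : ∀ x y : ℂˣ,
      x ∈ Subgroup.closure {u : ℂˣ | (u : ℂ) ∈ (g.map (Int.castRingHom ℂ)).roots} →
      y ∈ Subgroup.closure {u : ℂˣ | (u : ℂ) ∈ (g.map (Int.castRingHom ℂ)).roots} →
      ∃ p q : ℤ, (p ≠ 0 ∨ q ≠ 0) ∧ x ^ p * y ^ q = 1) :
    ∃ m : ℕ, 0 < m ∧
      (∀ lam μ : ℂ, lam ∈ (g.map (Int.castRingHom ℂ)).roots →
        μ ∈ (g.map (Int.castRingHom ℂ)).roots →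
        μ ^ m = lam ^ m ∨ μ ^ m = (lam ^ m)⁻¹) ∧
      ∃ q : Polynomial ℤ, q.Monic ∧ q.natDegree = 2 ∧
        (q.coeff 0 = 1 ∨ q.coeff 0 = -1) ∧
        (∀ z ∈ (q.map (Int.castRingHom ℂ)).roots, ‖z‖ ≠ 1) ∧
        ∃ j : ℕ,
          (((g.map (Int.castRingHom ℂ)).roots).map
              (fun z => Polynomial.X - Polynomial.C (z ^ m))).prod
            = (q.map (Int.castRingHom ℂ)) ^ j := by
  classical
  set gC : ℂ[X] := g.map (Int.castRingHom ℂ) with hgC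
  set gQ : ℚ[X] := g.map (Int.castRingHom ℚ) with hgQdef
  set gK : (gQ.SplittingField)[X] := gQ.map (algebraMap ℚ gQ.SplittingField) with hgKdef
  have hQmonic : gQ.Monic := hg.map _
  obtain ⟨i⟩ : Nonempty (gQ.SplittingField →ₐ[ℚ] ℂ) := ⟨IsAlgClosed.lift⟩
  set iR : gQ.SplittingField →+* ℂ := i.toRingHom with hiRdef
  have hc0 : gC.coeff 0 = ((g.coeff 0 : ℤ) : ℂ) := by simp [hgC]
  have hc0ne : gC.coeff 0 ≠ 0 := by
    rw [hc0]; rcases hconst with h | h <;> rw [h] <;> norm_num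
  have habs : ∀ z ∈ gC.roots, z ≠ 0 ∧ ‖z‖ ≠ 1 := by
    intro z hz
    refine ⟨?_, hhyp z hz⟩
    rintro rfl
    exact hc0ne (by rw [coeff_zero_eq_eval_zero]; exact (mem_roots'.mp hz).2)
  have hmapeq : gC = gK.map iR := by
    rw [hgC, hgKdef, map_map, map_map]
    congr 1
    exact (RingHom.ext_int _ _)
  have hKsplits : gK.Splits :=
    (SplittingField.splits gQ)
  have hroots : gC.roots = gK.roots.map iR := by
    rw [hmapeq, hKsplits.roots_map_of_injective iR.injective]
  -- pairwise relations between roots in the splitting field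
  have hrel := aux_rel gK iR gC hroots habs hrank_le
  -- pick a root
  have hcard : gK.roots.card = gQ.natDegree := by
    rw [← natDegree_map (algebraMap ℚ gQ.SplittingField)]
    exact (SplittingField.splits gQ).natDegree_eq_card_roots.symm
  have hdegpos : 0 < gQ.natDegree := hirr.natDegree_pos
  obtain ⟨lam0, hlam0⟩ : ∃ x, x ∈ gK.roots :=
    Multiset.card_pos_iff_exists_mem.mp (by rw [hcard]; omega)
  have hlamC : iR lam0 ∈ gC.roots := by rw [hroots]; exact Multiset.mem_map_of_mem _ hlam0
  obtain ⟨hl0C, hl1⟩ := habs _ hlamC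
  have habs0 : 0 < ‖iR lam0‖ := norm_pos_iff.mpr hl0C
  -- Galois facts
  obtain ⟨hgal1, hgal2⟩ := aux_galois gQ hirr hQmonic
  -- the key exponent
  obtain ⟨m, hmpos, hKkey⟩ :=
    aux_core gK iR lam0 hlam0 hrel habs0 hl1 hgal1 (fun μ hμ => hgal2 lam0 hlam0 μ hμ)
  have hKkeyn : ∀ μ ∈ gK.roots, μ ^ m = lam0 ^ m ∨ μ ^ m = (lam0 ^ m)⁻¹ := by
    intro μ hμ
    rcases hKkey μ hμ with h | h
    · left; rw [zpow_natCast, zpow_natCast] at h; exact h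
    · right; rw [zpow_neg, zpow_natCast, zpow_natCast] at h; exact h
  set A : ℂ := (iR lam0) ^ m with hA
  have hCkey : ∀ z ∈ gC.roots, z ^ m = A ∨ z ^ m = A⁻¹ := by
    intro z hz
    rw [hroots] at hz
    obtain ⟨μ, hμ, rfl⟩ := Multiset.mem_map.mp hz
    rcases hKkeyn μ hμ with h | h
    · left; rw [hA, ← map_pow, ← map_pow, h]
    · right; rw [← map_pow, h, map_inv₀, map_pow, hA]
  refine ⟨m, hmpos, ?_, ?_⟩
  · intro lam μ hlam hμ
    rcases hCkey lam hlam with h1 | h1 <;> rcases hCkey μ hμ with h2 | h2 <;>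
      rw [h1, h2] <;> simp [inv_inv]
  · -- part 2
    have hCmono : gC.Monic := hg.map _
    have hsplits : gC.Splits := IsAlgClosed.splits gC
    have hA0 : A ≠ 0 := pow_ne_zero _ hl0C
    have hAabs : ‖A‖ ≠ 1 := by
      rw [hA, norm_pow]
      intro hcon
      have hm0 : (m : ℤ) = 0 :=
        aux_zpow_eq_one habs0 hl1 (by rw [zpow_natCast]; exact hcon)
      omega
    have hdeg1 : 1 ≤ gC.roots.card := by
      rw [hroots, Multiset.card_map, hcard]; omega
    have habsc0 : ‖gC.coeff 0‖ = 1 := by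
      rw [hc0]; rcases hconst with h | h <;> rw [h] <;> norm_num
    have hint : ∀ z ∈ gC.roots, IsIntegral ℤ z := by
      intro z hz
      refine ⟨g, hg, ?_⟩
      rw [eval₂_eq_eval_map, algebraMap_int_eq]
      exact (mem_roots'.mp hz).2
    have hrat : ∃ r : ℚ, A + A⁻¹ = ((r : ℚ) : ℂ) := by
      set sK : gQ.SplittingField := lam0 ^ m + (lam0 ^ m)⁻¹ with hsK
      have hfix : ∀ σ : gQ.SplittingField ≃ₐ[ℚ] gQ.SplittingField, σ sK = sK := by
        intro σ
        rw [hsK, map_add, map_inv₀, map_pow]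
        have hσlam := hgal1 σ lam0 hlam0
        rcases hKkeyn _ hσlam with h | h
        · rw [h]
        · rw [h, inv_inv, add_comm]
      obtain ⟨r, hr⟩ := aux_rat gQ sK hfix
      refine ⟨r, ?_⟩
      have hcomm : iR sK = ((r : ℚ) : ℂ) := by
        rw [← hr]
        have h1 := i.commutes r
        have h2 : (algebraMap ℚ ℂ) r = ((r : ℚ) : ℂ) := by
          rw [eq_ratCast (algebraMap ℚ ℂ) r]
        rw [hiRdef]
        rw [show (i.toRingHom : gQ.SplittingField →+* ℂ) ((algebraMap ℚ gQ.SplittingField) r)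
            = i ((algebraMap ℚ gQ.SplittingField) r) from rfl, h1, h2]
      rw [← hcomm, hsK, map_add, map_inv₀, map_pow, hA]
    exact aux_part2 gC m A hCmono hsplits hmpos hA0 hAabs hCkey hdeg1 habsc0 hint hrat
end

section
/- Let f be an irreducible monic integer polynomial of degree 4 with constant term 1 and roots λ_1, λ_2, λ_3, λ_4, all of absolute value ≠ 1, such that the multiplicative group generated by the roots has rank 2. Then, possibly after reordering the roots and replacing each root by a fixed positive power, the roots satisfy λ_1λ_2 = 1 and λ_3λ_4 = 1. -/
/-!
Let `L ⊆ ℤ⁴` be the lattice of exponent vectors `e` with `∏ λᵢ ^ eᵢ = 1`; the group generated by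
the roots is `ℤ⁴ / L`, so it has rank 2 exactly when `L` does. The vector `(1, 1, 1, 1)` lies in `L`
because the product of the roots is the constant term, and a relation among `λ₁, λ₂, λ₃` yields a
nonzero `w ∈ L` with coordinate sum `0`. The Galois group permutes the roots transitively and
preserves `L`, so every permuted copy of `w` lies in `L`; as `L` has rank 2 and contains
`(1, 1, 1, 1)`, each such copy is `±w`. Hence all coordinates of `w` are `±d`, two of each sign, and
the relation `(λ₁λ₂) ^ d (λ₃λ₄) ^ (-d) = 1` together with `λ₁λ₂λ₃λ₄ = 1` gives `(λ₁λ₂) ^ (2d) = 1`.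
-/

open Polynomial

section IntegerVectors

variable {ι : Type*} [Fintype ι]

theorem not_linearIndependent_of_mem {L : Submodule ℤ (Fin 4 → ℤ)} {α β : Fin 4 → ℤ}
    (hαβ : ∀ p q : ℤ, p • α + q • β ∈ L → p = 0 ∧ q = 0) {u v w : Fin 4 → ℤ}
    (hu : u ∈ L) (hv : v ∈ L) (hw : w ∈ L) : ¬LinearIndependent ℤ ![u, v, w] := by
  intro huvw
  suffices LinearIndependent ℤ ![u, v, w, α, β] by
    simpa using this.fintype_card_le_finrank
  rw [Fintype.linearIndependent_iff] at huvw ⊢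
  intro c hc
  simp only [Fin.sum_univ_five, Matrix.cons_val] at hc
  have hαβ_mem : c 3 • α + c 4 • β ∈ L := by
    have : c 3 • α + c 4 • β = -(c 0 • u + c 1 • v + c 2 • w) := by
      linear_combination (norm := module) hc
    rw [this]
    exact L.neg_mem (L.add_mem (L.add_mem (L.smul_mem _ hu) (L.smul_mem _ hv)) (L.smul_mem _ hw))
  obtain ⟨h3, h4⟩ := hαβ _ _ hαβ_mem
  have h012 := huvw ![c 0, c 1, c 2] (by simpa [Fin.sum_univ_three, h3, h4] using hc)
  intro i
  fin_cases i
  exacts [h012 0, h012 1, h012 2, h3, h4]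

theorem eq_or_eq_neg_of_smul_eq_smul_comp {w : ι → ℤ} (hw : w ≠ 0) (σ : Equiv.Perm ι) {a b : ℤ}
    (h : a • w = b • (w ∘ σ)) : a = b ∨ a = -b := by
  have hS : ∑ i, w i ^ 2 ≠ 0 := by
    obtain ⟨i, hi⟩ := Function.ne_iff.mp hw
    exact (Finset.sum_pos' (fun j _ => sq_nonneg (w j))
      ⟨i, Finset.mem_univ _, sq_pos_iff.mpr hi⟩).ne'
  refine sq_eq_sq_iff_eq_or_eq_neg.mp (mul_right_cancel₀ hS ?_)
  calc a ^ 2 * ∑ i, w i ^ 2 = ∑ i, (a * w i) ^ 2 := by simp [Finset.mul_sum, mul_pow]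
    _ = ∑ i, (b * w (σ i)) ^ 2 := by simpa using congrArg (fun v => ∑ i, v i ^ 2) h
    _ = b ^ 2 * ∑ i, w i ^ 2 := by
      simp [Finset.mul_sum, mul_pow, Equiv.sum_comp σ (fun i => b ^ 2 * w i ^ 2)]

theorem comp_perm_eq_or_eq_neg {w : ι → ℤ} (hw : w ≠ 0)
    (hsum : ∑ i, w i = 0) (σ : Equiv.Perm ι) (hdep : ¬LinearIndependent ℤ ![1, w, w ∘ σ]) :
    w ∘ σ = w ∨ w ∘ σ = -w := by
  obtain ⟨c, hc, k, hk⟩ := Fintype.not_linearIndependent_iff.mp hdep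
  have hpt (i : ι) : c 0 + c 1 * w i + c 2 * w (σ i) = 0 := by
    simpa [Fin.sum_univ_three] using congrFun hc i
  have hc0 : c 0 = 0 := by
    have hsum' : ∑ i, w (σ i) = 0 := by rw [Equiv.sum_comp σ w, hsum]
    have hι : Fintype.card ι ≠ 0 := by
      obtain ⟨i, -⟩ := Function.ne_iff.mp hw
      have : Nonempty ι := ⟨i⟩
      exact Fintype.card_ne_zero
    have := Finset.sum_eq_zero (s := Finset.univ) fun i _ => hpt i
    rw [Finset.sum_add_distrib, Finset.sum_add_distrib, ← Finset.mul_sum, ← Finset.mul_sum,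
      hsum, hsum', Finset.sum_const, Finset.card_univ] at this
    simpa [hι] using this
  have h : c 1 • w = (-c 2) • (w ∘ σ) := by
    funext i
    simp only [Pi.smul_apply, Function.comp_apply, smul_eq_mul]
    linear_combination hpt i - hc0
  have hc12 := eq_or_eq_neg_of_smul_eq_smul_comp hw σ h
  have hc1 : c 1 ≠ 0 := by
    intro h1
    have h2 : c 2 = 0 := by omega
    fin_cases k <;> simp_all
  rcases hc12 with h' | h'
  · exact .inl (smul_right_injective _ hc1 (h.trans (by rw [h']))).symm
  · refine .inr (smul_right_injective _ hc1 ?_)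
    rw [neg_neg] at h'
    show c 1 • (w ∘ σ) = c 1 • -w
    rw [smul_neg, h, ← h', neg_smul, neg_neg]

theorem exists_mem_ne_zero_sum_eq_zero {L : Submodule ℤ (ι → ℤ)}
    (hone : 1 ∈ L) {v : ι → ℤ} (hv : v ∈ L) {j : ι} (hj : v j = 0) (hv0 : v ≠ 0) :
    ∃ w ∈ L, w ≠ 0 ∧ ∑ k, w k = 0 := by
  obtain ⟨i, hi⟩ := Function.ne_iff.mp hv0
  have hij : v i ≠ v j := hj ▸ hi
  refine ⟨(Fintype.card ι : ℤ) • v - (∑ k, v k) • 1,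
    L.sub_mem (L.smul_mem _ hv) (L.smul_mem _ hone), fun h => hij ?_, ?_⟩
  · have hι : (Fintype.card ι : ℤ) ≠ 0 := by
      have : Nonempty ι := ⟨i⟩
      exact_mod_cast Fintype.card_ne_zero
    have hi := congrFun h i
    have hj := congrFun h j
    simp only [Pi.sub_apply, Pi.smul_apply, smul_eq_mul, Pi.one_apply, mul_one,
      Pi.zero_apply] at hi hj
    exact mul_left_cancel₀ hι (by linarith)
  · simp [Finset.sum_sub_distrib, ← Finset.mul_sum]

theorem eq_or_eq_neg_of_forall_exists_perm {L : Submodule ℤ (ι → ℤ)}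
    (hone : 1 ∈ L) (hrank : ∀ u ∈ L, ∀ v ∈ L, ∀ w ∈ L, ¬LinearIndependent ℤ ![u, v, w])
    (hsymm : ∀ i j, ∃ σ : Equiv.Perm ι, σ i = j ∧ ∀ e ∈ L, e ∘ σ ∈ L)
    {w : ι → ℤ} (hw : w ∈ L) (hw0 : w ≠ 0) (hsum : ∑ k, w k = 0) (i j : ι) :
    w j = w i ∨ w j = -w i := by
  obtain ⟨σ, rfl, hσ⟩ := hsymm i j
  rcases comp_perm_eq_or_eq_neg hw0 hsum σ (hrank _ hone _ hw _ (hσ w hw)) with h | h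
  · exact .inl (congrFun h i)
  · exact .inr (by simpa using congrFun h i)

theorem exists_perm_comp_eq {w : Fin 4 → ℤ} (hsum : ∑ i, w i = 0)
    (hpm : ∀ j, w j = w 0 ∨ w j = -w 0) :
    ∃ π : Equiv.Perm (Fin 4), w ∘ π = ![w 0, w 0, -w 0, -w 0] := by
  rw [Fin.sum_univ_four] at hsum
  have := hpm 1; have := hpm 2; have := hpm 3
  by_cases h1 : w 1 = w 0
  · exact ⟨1, by ext i; fin_cases i <;> simp <;> omega⟩
  by_cases h2 : w 2 = w 0
  · exact ⟨Equiv.swap 1 2, by ext i; fin_cases i <;> simp [Equiv.swap_apply_of_ne_of_ne] <;> omega⟩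
  · exact ⟨Equiv.swap 1 3, by ext i; fin_cases i <;> simp [Equiv.swap_apply_of_ne_of_ne] <;> omega⟩

end IntegerVectors

section MulRelations

variable {ι G H : Type*} [Fintype ι] [CommGroup G] [CommGroup H]

def mulRelations (x : ι → G) : Submodule ℤ (ι → ℤ) where
  carrier := {e | ∏ i, x i ^ e i = 1}
  add_mem' {e e'} (he : ∏ i, x i ^ e i = 1) (he' : ∏ i, x i ^ e' i = 1) := by
    simp [zpow_add, Finset.prod_mul_distrib, he, he']
  zero_mem' := by simp
  smul_mem' n e (he : ∏ i, x i ^ e i = 1) := by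
    simp [mul_comm n, zpow_mul, Finset.prod_zpow, he]

@[simp]
theorem mem_mulRelations {x : ι → G} {e : ι → ℤ} :
    e ∈ mulRelations x ↔ ∏ i, x i ^ e i = 1 :=
  Iff.rfl

theorem one_mem_mulRelations {x : ι → G} : 1 ∈ mulRelations x ↔ ∏ i, x i = 1 := by
  simp

theorem comp_mem_mulRelations_comp {x : ι → G} {e : ι → ℤ} (σ : Equiv.Perm ι) :
    e ∘ σ ∈ mulRelations (x ∘ σ) ↔ e ∈ mulRelations x := by
  simp only [mem_mulRelations, Function.comp_apply, Equiv.prod_comp σ (fun i => x i ^ e i)]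

theorem mulRelations_le_comp (x : ι → G) (f : G →* H) :
    mulRelations x ≤ mulRelations (f ∘ x) := fun e he => by
  simpa [← map_zpow, ← map_prod] using congrArg f he

theorem mulRelations_comp_of_injective (x : ι → G) {f : G →* H} (hf : Function.Injective f) :
    mulRelations (f ∘ x) = mulRelations x := by
  refine le_antisymm (fun e he => hf ?_) (mulRelations_le_comp x f)
  simpa [← map_zpow, ← map_prod] using he

theorem smul_add_smul_mem_mulRelations_iff {x : ι → G} (α β : ι → ℤ) (p q : ℤ) :
    p • α + q • β ∈ mulRelations x ↔ (∏ i, x i ^ α i) ^ p * (∏ i, x i ^ β i) ^ q = 1 := by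
  simp only [mem_mulRelations, Pi.add_apply, Pi.smul_apply, smul_eq_mul, zpow_add,
    Finset.prod_mul_distrib, ← Finset.prod_zpow, ← zpow_mul, mul_comm p, mul_comm q]

theorem not_linearIndependent_of_mem_mulRelations {x : Fin 4 → G}
    {a b : G} (ha : a ∈ Subgroup.closure (Set.range x)) (hb : b ∈ Subgroup.closure (Set.range x))
    (hab : ∀ p q : ℤ, a ^ p * b ^ q = 1 → p = 0 ∧ q = 0) {u v w : Fin 4 → ℤ}
    (hu : u ∈ mulRelations x) (hv : v ∈ mulRelations x) (hw : w ∈ mulRelations x) :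
    ¬LinearIndependent ℤ ![u, v, w] := by
  obtain ⟨α, rfl⟩ := Subgroup.exists_of_mem_closure_range x a ha
  obtain ⟨β, rfl⟩ := Subgroup.exists_of_mem_closure_range x b hb
  exact not_linearIndependent_of_mem (α := α) (β := β)
    (fun p q h => hab p q ((smul_add_smul_mem_mulRelations_iff α β p q).mp h)) hu hv hw

theorem exists_pow_mul_eq_one {x : Fin 4 → G}
    (hone : 1 ∈ mulRelations x) {d : ℤ} (hd : d ≠ 0) (hw : ![d, d, -d, -d] ∈ mulRelations x) :
    ∃ u : ℕ, 0 < u ∧ (x 0 * x 1) ^ u = 1 ∧ (x 2 * x 3) ^ u = 1 := by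
  have hB : x 2 * x 3 = (x 0 * x 1)⁻¹ := by
    refine eq_inv_of_mul_eq_one_right ?_
    rw [← one_mem_mulRelations.mp hone, Fin.prod_univ_four]
    simp only [mul_assoc]
  have hA : (x 0 * x 1) ^ (2 * d) = 1 :=
    calc (x 0 * x 1) ^ (2 * d) = (x 0 * x 1) ^ d * ((x 2 * x 3) ^ d)⁻¹ := by
          rw [hB, inv_zpow, inv_inv, two_mul, zpow_add]
      _ = 1 := by
          rw [← mem_mulRelations.mp hw, Fin.prod_univ_four]
          simp only [Matrix.cons_val, mul_zpow, zpow_neg, mul_inv]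
          ac_rfl
  have hfin : IsOfFinOrder (x 0 * x 1) := isOfFinOrder_iff_zpow_eq_one.mpr ⟨2 * d, by omega, hA⟩
  refine ⟨orderOf (x 0 * x 1), hfin.orderOf_pos, pow_orderOf_eq_one _, ?_⟩
  rw [hB, inv_pow, pow_orderOf_eq_one, inv_one]

end MulRelations

section Galois

variable {K E ι : Type*} [Field K] [Field E] [Algebra K E] [Fintype ι]

theorem aeval_eq_zero_of_aroots_eq {p : K[X]} {y : ι → E}
    (hroots : p.aroots E = Finset.univ.val.map y) (k : ι) :
    aeval (y k) p = 0 :=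
  (mem_aroots.mp (hroots ▸ Multiset.mem_map_of_mem _ (Finset.mem_univ_val k))).2

theorem exists_perm_mulRelations_le_comp {p : K[X]} (hp : p ≠ 0) {x : ι → Eˣ}
    (hx : Function.Injective x) (hroots : p.aroots E = Finset.univ.val.map fun i => (x i : E))
    {F : IntermediateField K E} (hmem : ∀ k, (x k : E) ∈ F) (φ : F →ₐ[K] E) :
    ∃ τ : Equiv.Perm ι, (∀ k, φ ⟨x k, hmem k⟩ = x (τ k)) ∧
      mulRelations x ≤ mulRelations (x ∘ τ) := by
  have hperm (k : ι) : ∃ m, φ ⟨x k, hmem k⟩ = x m := by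
    have hroot : aeval (φ ⟨x k, hmem k⟩) p = 0 := by
      rw [aeval_algHom_apply, ← map_zero φ]
      refine congrArg φ (Subtype.ext ?_)
      rw [← IntermediateField.aeval_coe]
      exact aeval_eq_zero_of_aroots_eq hroots k
    have := mem_aroots.mpr ⟨hp, hroot⟩
    rw [hroots] at this
    obtain ⟨m, -, hm⟩ := Multiset.mem_map.mp this
    exact ⟨m, hm.symm⟩
  choose g hg using hperm
  have hg_inj : Function.Injective g := fun k k' h =>
    hx (Units.ext (congrArg Subtype.val (φ.toRingHom.injective
      (show φ ⟨x k, hmem k⟩ = φ ⟨x k', hmem k'⟩ by rw [hg, hg, h]))))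
  let τ := Equiv.ofBijective g (Finite.injective_iff_bijective.mp hg_inj)
  let μ : ι → Fˣ := fun k => Units.mk0 ⟨x k, hmem k⟩ fun h => (x k).ne_zero (congrArg Subtype.val h)
  refine ⟨τ, hg, ?_⟩
  calc mulRelations x = mulRelations (Units.map (F.val : F →* E) ∘ μ) := by
        congr; funext k; exact Units.ext rfl
    _ = mulRelations μ := mulRelations_comp_of_injective μ (Units.map_injective F.val.injective)
    _ ≤ mulRelations (Units.map (φ : F →* E) ∘ μ) := mulRelations_le_comp μ _
    _ = mulRelations (x ∘ τ) := by
        congr; funext k; exact Units.ext (hg k)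

theorem exists_perm_comp_mem_mulRelations [IsAlgClosed E] {p : K[X]} (hp : Irreducible p)
    {x : ι → Eˣ} (hx : Function.Injective x)
    (hroots : p.aroots E = Finset.univ.val.map fun i => (x i : E))
    (i j : ι) : ∃ σ : Equiv.Perm ι, σ i = j ∧ ∀ e ∈ mulRelations x, e ∘ σ ∈ mulRelations x := by
  have hroot := aeval_eq_zero_of_aroots_eq hroots
  set F := IntermediateField.adjoin K (Set.range fun k => (x k : E))
  have hmem (k : ι) : (x k : E) ∈ F := IntermediateField.subset_adjoin _ _ ⟨k, rfl⟩
  obtain ⟨φ, hφ⟩ := IntermediateField.exists_algHom_adjoin_of_splits_of_aeval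
    (by
      rintro _ ⟨k, rfl⟩
      exact ⟨IsAlgebraic.isIntegral ⟨p, hp.ne_zero, hroot k⟩, IsAlgClosed.splits _⟩)
    (hmem j) (y := (x i : E)) (by simp [← minpoly.eq_of_irreducible hp (hroot j), hroot i])
  obtain ⟨τ, hτ, hle⟩ := exists_perm_mulRelations_le_comp hp.ne_zero hx hroots hmem φ
  have hτj : τ j = i := hx (Units.ext ((hτ j).symm.trans hφ))
  refine ⟨τ.symm, τ.symm_apply_eq.mpr hτj.symm, fun e he => ?_⟩
  rw [← comp_mem_mulRelations_comp τ, Function.comp_assoc, τ.symm_comp_self]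
  exact hle he

theorem exists_perm_pow_mul_eq_one_of_aroots [IsAlgClosed E] {p : K[X]} (hp : Irreducible p)
    {x : Fin 4 → Eˣ} (hx : Function.Injective x)
    (hroots : p.aroots E = Finset.univ.val.map fun i => (x i : E)) (hprod : ∏ i, x i = 1)
    {a b : Eˣ} (ha : a ∈ Subgroup.closure (Set.range x)) (hb : b ∈ Subgroup.closure (Set.range x))
    (hab : ∀ k l : ℤ, a ^ k * b ^ l = 1 → k = 0 ∧ l = 0)
    (hdep : ∃ k l m : ℤ, (k ≠ 0 ∨ l ≠ 0 ∨ m ≠ 0) ∧ x 0 ^ k * x 1 ^ l * x 2 ^ m = 1) :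
    ∃ u : ℕ, 0 < u ∧ ∃ π : Equiv.Perm (Fin 4),
      (x (π 0) * x (π 1)) ^ u = 1 ∧ (x (π 2) * x (π 3)) ^ u = 1 := by
  have hone : 1 ∈ mulRelations x := one_mem_mulRelations.mpr hprod
  obtain ⟨k, l, m, hklm, hrel⟩ := hdep
  obtain ⟨w, hw, hw0, hwsum⟩ := exists_mem_ne_zero_sum_eq_zero hone (v := ![k, l, m, 0])
    (by simpa [Fin.prod_univ_four] using hrel) (j := 3) rfl
    fun h => by simp [funext_iff, Fin.forall_fin_succ] at h; omega
  have hpm := eq_or_eq_neg_of_forall_exists_perm hone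
    (fun _ hu _ hv _ hw => not_linearIndependent_of_mem_mulRelations ha hb hab hu hv hw)
    (exists_perm_comp_mem_mulRelations hp hx hroots) hw hw0 hwsum 0
  have hw00 : w 0 ≠ 0 := fun h => hw0 (funext fun j => by simpa [h] using hpm j)
  obtain ⟨π, hπ⟩ := exists_perm_comp_eq hwsum hpm
  obtain ⟨u, hu, hπu⟩ := exists_pow_mul_eq_one (x := x ∘ π)
    ((comp_mem_mulRelations_comp π).mpr hone) hw00 (hπ ▸ (comp_mem_mulRelations_comp π).mpr hw)
  exact ⟨u, hu, π, hπu⟩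

end Galois

theorem prod_roots_eq_one {K : Type*} [Field K] [IsAlgClosed K] {p : K[X]} (hp : p.Monic)
    (hdeg : Even p.natDegree) (h0 : p.coeff 0 = 1) : p.roots.prod = 1 := by
  have := (IsAlgClosed.splits p).coeff_zero_eq_prod_roots_of_monic hp
  rwa [h0, hdeg.neg_one_pow, one_mul, eq_comm] at this

theorem stmt11_general (f : Polynomial ℤ) (hf : f.Monic) (hdeg : f.natDegree = 4)
    (hirr : Irreducible (f.map (Int.castRingHom ℚ)))
    (hconst : f.coeff 0 = 1)
    (lam : Fin 4 → ℂ)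
    (hroots : (f.map (Int.castRingHom ℂ)).roots = Multiset.map lam Finset.univ.val)
    (hrank_ge : ∃ a b : ℂˣ,
      a ∈ Subgroup.closure {u : ℂˣ | (u : ℂ) ∈ (f.map (Int.castRingHom ℂ)).roots} ∧
      b ∈ Subgroup.closure {u : ℂˣ | (u : ℂ) ∈ (f.map (Int.castRingHom ℂ)).roots} ∧
      ∀ p q : ℤ, a ^ p * b ^ q = 1 → p = 0 ∧ q = 0)
    (hrank_le : ∀ a b c : ℂˣ,
      a ∈ Subgroup.closure {u : ℂˣ | (u : ℂ) ∈ (f.map (Int.castRingHom ℂ)).roots} →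
      b ∈ Subgroup.closure {u : ℂˣ | (u : ℂ) ∈ (f.map (Int.castRingHom ℂ)).roots} →
      c ∈ Subgroup.closure {u : ℂˣ | (u : ℂ) ∈ (f.map (Int.castRingHom ℂ)).roots} →
      ∃ p q r : ℤ, (p ≠ 0 ∨ q ≠ 0 ∨ r ≠ 0) ∧ a ^ p * b ^ q * c ^ r = 1) :
    ∃ u : ℕ, 0 < u ∧ ∃ π : Equiv.Perm (Fin 4),
      (lam (π 0) * lam (π 1)) ^ u = 1 ∧ (lam (π 2) * lam (π 3)) ^ u = 1 := by
  set F := f.map (Int.castRingHom ℂ)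
  have hFQ : (f.map (Int.castRingHom ℚ)).aroots ℂ = F.roots := by
    rw [aroots_def, map_map]
    congr 2
  have hprod : ∏ i, lam i = 1 := by
    rw [Finset.prod_eq_multiset_prod, ← hroots]
    exact prod_roots_eq_one (hf.map _) (Nat.even_iff.mpr (by simp [F, hf.natDegree_map, hdeg]))
      (by simp [F, hconst])
  obtain ⟨Λ, rfl⟩ : ∃ Λ : Fin 4 → ℂˣ, (fun i => (Λ i : ℂ)) = lam :=
    ⟨fun i => Units.mk0 (lam i) (Finset.prod_ne_zero_iff.mp (hprod ▸ one_ne_zero) i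
      (Finset.mem_univ i)), rfl⟩
  have hclosure : {u : ℂˣ | (u : ℂ) ∈ F.roots} = Set.range Λ := by
    ext u
    simp only [Set.mem_ofPred_eq, hroots, Multiset.mem_map, Finset.mem_univ_val, true_and,
      Set.mem_range, Units.ext_iff]
  rw [hclosure] at hrank_ge hrank_le
  have hΛ : Function.Injective Λ := by
    have hnodup := nodup_roots (hirr.separable.map (f := algebraMap ℚ ℂ))
    rw [← aroots_def, hFQ, hroots, Multiset.nodup_map_iff_inj_on Finset.univ.nodup] at hnodup
    exact fun a b h => hnodup a (Finset.mem_univ_val a) b (Finset.mem_univ_val b) (congrArg _ h)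
  obtain ⟨a, b, ha, hb, hab⟩ := hrank_ge
  obtain ⟨u, hu, π, h01, h23⟩ := exists_perm_pow_mul_eq_one_of_aroots hirr hΛ (hFQ.trans hroots)
    (Units.ext (by simpa using hprod)) ha hb hab (hrank_le _ _ _ (Subgroup.subset_closure ⟨0, rfl⟩)
      (Subgroup.subset_closure ⟨1, rfl⟩) (Subgroup.subset_closure ⟨2, rfl⟩))
  exact ⟨u, hu, π, by simpa [Units.ext_iff] using h01, by simpa [Units.ext_iff] using h23⟩

/-- Let `f` be an irreducible monic integer polynomial of degree 4 with
constant term 1, roots `lam 0, …, lam 3` all of absolute value ≠ 1, such that the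
multiplicative group generated by the roots has rank 2 (there are two ℤ-independent
elements, and any three elements are ℤ-dependent). Then after reordering the roots and
replacing each root by a fixed positive power `u`, they satisfy `(lam 0 * lam 1)^u = 1`
and `(lam 2 * lam 3)^u = 1`. -/
theorem stmt11 (f : Polynomial ℤ) (hf : f.Monic) (hdeg : f.natDegree = 4)
    (hirr : Irreducible (f.map (Int.castRingHom ℚ)))
    (hconst : f.coeff 0 = 1)
    (lam : Fin 4 → ℂ)
    (hroots : (f.map (Int.castRingHom ℂ)).roots = Multiset.map lam Finset.univ.val)
    (habs : ∀ i, ‖lam i‖ ≠ 1)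
    (hrank_ge : ∃ a b : ℂˣ,
      a ∈ Subgroup.closure {u : ℂˣ | (u : ℂ) ∈ (f.map (Int.castRingHom ℂ)).roots} ∧
      b ∈ Subgroup.closure {u : ℂˣ | (u : ℂ) ∈ (f.map (Int.castRingHom ℂ)).roots} ∧
      ∀ p q : ℤ, a ^ p * b ^ q = 1 → p = 0 ∧ q = 0)
    (hrank_le : ∀ a b c : ℂˣ,
      a ∈ Subgroup.closure {u : ℂˣ | (u : ℂ) ∈ (f.map (Int.castRingHom ℂ)).roots} →
      b ∈ Subgroup.closure {u : ℂˣ | (u : ℂ) ∈ (f.map (Int.castRingHom ℂ)).roots} →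
      c ∈ Subgroup.closure {u : ℂˣ | (u : ℂ) ∈ (f.map (Int.castRingHom ℂ)).roots} →
      ∃ p q r : ℤ, (p ≠ 0 ∨ q ≠ 0 ∨ r ≠ 0) ∧ a ^ p * b ^ q * c ^ r = 1) :
    ∃ u : ℕ, 0 < u ∧ ∃ π : Equiv.Perm (Fin 4),
      (lam (π 0) * lam (π 1)) ^ u = 1 ∧ (lam (π 2) * lam (π 3)) ^ u = 1 :=
  stmt11_general f hf hdeg hirr hconst lam hroots hrank_ge hrank_le
end

section
/- Let f be an irreducible monic integer polynomial of degree 4 with constant term ±1, roots λ_1, λ_2, λ_3, λ_4 all of absolute value ≠ 1, satisfying λ_1^k λ_2^k = 1 and λ_3^k λ_4^k = 1 for some integer k > 0 (so the roots do not have full rank). Then the Galois group of f over ℚ contains no element of order 3; in particular its order is a power of 2. -/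
/-!
An element `σ` of order 3 in the Galois group permutes the four roots as a 3-cycle, fixing one
root `a`. The relation `(x * y) ^ k = 1` between roots is Galois invariant, so if it holds for `a`
and its partner `b`, it holds for `a` and every root in the orbit of `b`, i.e. every root other
than `a`. The two roots of the pair not containing `a` then both have `k`-th power `a⁻ᵏ`, and
their relation gives `a ^ (2 * k) = 1`, contradicting `‖a‖ ≠ 1`. Since the Galois group embeds in
`S₄` of order `2 ^ 3 * 3`, Cauchy's theorem then makes it a `2`-group.
-/

open Polynomial

namespace Equiv.Perm

variable {α : Type*}

theorem exists_fixed_and_sameCycle_of_orderOf_eq_prime [Fintype α] {π : Perm α} {p : ℕ}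
    (hp : p.Prime) (hπ : orderOf π = p) (hα : Fintype.card α = p + 1) :
    ∃ a, π a = a ∧ ∀ x y, x ≠ a → y ≠ a → π.SameCycle x y := by
  classical
  have hcyc : π.IsCycle := isCycle_of_prime_order' (hπ ▸ hp) (by have := hp.two_le; omega)
  have hsupp : π.supportᶜ.card = 1 := by
    rw [Finset.card_compl, ← hcyc.orderOf, hπ, hα, Nat.add_sub_cancel_left]
  obtain ⟨a, ha⟩ := Finset.card_eq_one.mp hsupp
  have hfix : ∀ x, π x = x ↔ x = a := fun x => by
    rw [← notMem_support, ← Finset.mem_compl, ha, Finset.mem_singleton]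
  exact ⟨a, (hfix a).mpr rfl, fun x y hx hy =>
    hcyc.sameCycle (mt (hfix x).mp hx) (mt (hfix y).mp hy)⟩

theorem mul_eq_one_of_sameCycle [Finite α] {M : Type*} [Monoid M] {π : Perm α} {μ : α → M}
    (hμ : ∀ x y, μ x * μ y = 1 → μ (π x) * μ (π y) = 1) {a b x : α} (ha : π a = a)
    (hab : μ a * μ b = 1) (hbx : π.SameCycle b x) : μ a * μ x = 1 := by
  obtain ⟨n, -, rfl⟩ := hbx.exists_pow_eq'
  clear hbx
  induction n with
  | zero => simpa using hab
  | succ n ih => simpa [pow_succ', ha] using hμ _ _ ih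

theorem exists_sq_eq_one_of_orderOf_eq_three [Fintype α] {M : Type*} [CommMonoid M]
    (e : Fin 4 ≃ α) {π : Perm α} (hπ : orderOf π = 3) {μ : α → M}
    (hμ : ∀ x y, μ x * μ y = 1 → μ (π x) * μ (π y) = 1)
    (h01 : μ (e 0) * μ (e 1) = 1) (h23 : μ (e 2) * μ (e 3) = 1) : ∃ a, μ a ^ 2 = 1 := by
  obtain ⟨a, ha, hcyc⟩ := exists_fixed_and_sameCycle_of_orderOf_eq_prime Nat.prime_three hπ
    (by simp [← Fintype.card_congr e])
  have key : ∀ b c d, b ≠ a → c ≠ a → d ≠ a → μ a * μ b = 1 → μ c * μ d = 1 → μ a ^ 2 = 1 := by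
    intro b c d hb hc hd hab hcd
    calc μ a ^ 2 = μ a ^ 2 * (μ c * μ d) := by rw [hcd, mul_one]
      _ = (μ a * μ c) * (μ a * μ d) := by rw [sq, mul_mul_mul_comm]
      _ = 1 := by rw [mul_eq_one_of_sameCycle hμ ha hab (hcyc b c hb hc),
          mul_eq_one_of_sameCycle hμ ha hab (hcyc b d hb hd), mul_one]
  obtain ⟨i, rfl⟩ := e.surjective a
  have hne : ∀ j, i ≠ j → e j ≠ e i := fun j h => e.injective.ne (Ne.symm h)
  refine ⟨e i, ?_⟩
  fin_cases i
  · exact key _ _ _ (hne 1 (by decide)) (hne 2 (by decide)) (hne 3 (by decide)) h01 h23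
  · exact key _ _ _ (hne 0 (by decide)) (hne 2 (by decide)) (hne 3 (by decide))
      (by rwa [mul_comm]) h23
  · exact key _ _ _ (hne 3 (by decide)) (hne 0 (by decide)) (hne 1 (by decide)) h23 h01
  · exact key _ _ _ (hne 2 (by decide)) (hne 0 (by decide)) (hne 1 (by decide))
      (by rwa [mul_comm]) h01

end Equiv.Perm

namespace Polynomial.Gal

variable {F E : Type*} [Field F] [Field E] [Algebra F E] {p : F[X]}
  [Fact ((p.map (algebraMap F E)).Splits)]

theorem smul_mul_smul_pow_eq_one (σ : p.Gal) {x y : p.rootSet E} {k : ℕ}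
    (h : ((x : E) * y) ^ k = 1) :
    (((σ • x : p.rootSet E) : E) * (σ • y : p.rootSet E)) ^ k = 1 := by
  let j := IsScalarTower.toAlgHom F p.SplittingField E
  obtain ⟨x, rfl⟩ := (rootsEquivRoots p E).surjective x
  obtain ⟨y, rfl⟩ := (rootsEquivRoots p E).surjective y
  simp only [smul_def, Equiv.symm_apply_apply]
  change (j x * j y) ^ k = 1 at h
  change (j (σ x) * j (σ y)) ^ k = 1
  have hxy : ((x : p.SplittingField) * y) ^ k = 1 := j.injective (by simpa using h)
  rw [← map_mul, ← map_mul, ← map_pow, ← map_pow, hxy, map_one, map_one]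

theorem card_dvd_factorial_card_rootSet :
    Nat.card p.Gal ∣ (Nat.card (p.rootSet E)).factorial := by
  rw [← Nat.card_perm]
  exact Subgroup.card_dvd_of_injective _ (galActionHom_injective p E)

end Polynomial.Gal

theorem Polynomial.rootSet_eq_range {R S ι : Type*} [CommRing R] [CommRing S] [IsDomain S]
    [Algebra R S] [Fintype ι] {p : R[X]} {r : ι → S}
    (h : p.aroots S = Multiset.map r Finset.univ.val) : p.rootSet S = Set.range r := by
  classical
  ext z
  simp [rootSet, h]

theorem exists_card_eq_two_pow_of_card_dvd {G : Type*} [Group G] [Finite G] {q n : ℕ}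
    (hq : q.Prime) (hG : Nat.card G ∣ 2 ^ n * q) (hord : ∀ g : G, orderOf g ≠ q) :
    ∃ t, Nat.card G = 2 ^ t := by
  have : Fact q.Prime := ⟨hq⟩
  have hndvd : ¬ q ∣ Nat.card G := fun h =>
    let ⟨g, hg⟩ := exists_prime_orderOf_dvd_card' q h
    hord g hg
  obtain ⟨t, -, ht⟩ := (Nat.dvd_prime_pow Nat.prime_two).mp
    (((hq.coprime_iff_not_dvd.mpr hndvd).symm.dvd_of_dvd_mul_right hG))
  exact ⟨t, ht⟩

theorem stmt12_general (f : Polynomial ℤ)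
    (hirr : Irreducible (f.map (Int.castRingHom ℚ)))
    (lam : Fin 4 → ℂ)
    (hroots : (f.map (Int.castRingHom ℂ)).roots = Multiset.map lam Finset.univ.val)
    (habs : ∀ i, ‖lam i‖ ≠ 1)
    (k : ℕ) (hk : 0 < k)
    (h12 : (lam 0 * lam 1) ^ k = 1) (h34 : (lam 2 * lam 3) ^ k = 1) :
    (∀ σ : (f.map (Int.castRingHom ℚ)).Gal, orderOf σ ≠ 3) ∧
      ∃ t : ℕ, Fintype.card (f.map (Int.castRingHom ℚ)).Gal = 2 ^ t := by
  set p := f.map (Int.castRingHom ℚ)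
  have : Fact ((p.map (algebraMap ℚ ℂ)).Splits) := ⟨IsAlgClosed.splits _⟩
  have haroots : p.aroots ℂ = Multiset.map lam Finset.univ.val := by
    rw [aroots_def, map_map, ← hroots,
      RingHom.ext_int ((algebraMap ℚ ℂ).comp (Int.castRingHom ℚ)) (Int.castRingHom ℂ)]
  have hinj : Function.Injective lam :=
    Fintype.nodup_map_univ_iff_injective.mp (haroots ▸ nodup_roots hirr.separable.map)
  let e : Fin 4 ≃ p.rootSet ℂ :=
    (Equiv.ofInjective lam hinj).trans (Equiv.setCongr (rootSet_eq_range haroots).symm)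
  have hno3 : ∀ σ : p.Gal, orderOf σ ≠ 3 := by
    intro σ hσ
    obtain ⟨x, hx⟩ := Equiv.Perm.exists_sq_eq_one_of_orderOf_eq_three e
      (π := Gal.galActionHom p ℂ σ) (μ := fun x => (x : ℂ) ^ k)
      (by rwa [orderOf_injective _ (Gal.galActionHom_injective p ℂ)])
      (fun x y h => by simp only [← mul_pow] at h ⊢; exact Gal.smul_mul_smul_pow_eq_one σ h)
      (by simp only [← mul_pow]; exact h12) (by simp only [← mul_pow]; exact h34)
    obtain ⟨i, rfl⟩ := e.surjective x
    have hpow : lam i ^ (k * 2) = 1 := by rw [pow_mul]; exact hx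
    exact habs i (Complex.norm_eq_one_of_pow_eq_one hpow (by positivity))
  refine ⟨hno3, ?_⟩
  have hcard : Nat.card p.Gal ∣ 2 ^ 3 * 3 := by
    have := Gal.card_dvd_factorial_card_rootSet (p := p) (E := ℂ)
    rwa [← Nat.card_congr e, Nat.card_fin] at this
  simpa [Nat.card_eq_fintype_card] using
    exists_card_eq_two_pow_of_card_dvd Nat.prime_three hcard hno3

/-- Let `f` be an irreducible monic integer polynomial of degree 4 with
constant term ±1, roots `lam 0, …, lam 3` all of absolute value ≠ 1, satisfying
`(lam 0 * lam 1)^k = 1` and `(lam 2 * lam 3)^k = 1` for some `k > 0` (so the roots do not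
have full rank). Then the Galois group of `f` over ℚ contains no element of order 3;
in particular its order is a power of 2. -/
theorem stmt12 (f : Polynomial ℤ) (hf : f.Monic) (hdeg : f.natDegree = 4)
    (hirr : Irreducible (f.map (Int.castRingHom ℚ)))
    (hconst : f.coeff 0 = 1 ∨ f.coeff 0 = -1)
    (lam : Fin 4 → ℂ)
    (hroots : (f.map (Int.castRingHom ℂ)).roots = Multiset.map lam Finset.univ.val)
    (habs : ∀ i, ‖lam i‖ ≠ 1)
    (k : ℕ) (hk : 0 < k)
    (h12 : (lam 0 * lam 1) ^ k = 1) (h34 : (lam 2 * lam 3) ^ k = 1) :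
    (∀ σ : (f.map (Int.castRingHom ℚ)).Gal, orderOf σ ≠ 3) ∧
      ∃ t : ℕ, Fintype.card (f.map (Int.castRingHom ℚ)).Gal = 2 ^ t :=
  stmt12_general f hirr lam hroots habs k hk h12 h34
end

section
/- Let f be an Anosov polynomial of degree 4 (monic, integer coefficients, constant term ±1, no roots of absolute value 1) with roots λ_1, λ_2, λ_3, λ_4, and let e_1, e_2, e_3, e_4 ∈ ℤ be such that μ = λ_1^{e_1}λ_2^{e_2}λ_3^{e_3}λ_4^{e_4} is not rational. Then the minimal polynomial of μ over ℚ has even degree. -/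
/-!
Work in a finite Galois extension `L/ℚ` through which the roots `λᵢ` of `f` factor. As `f` has no
root `±1`, every `λᵢ` has a minimal polynomial of degree 2 or 4 with constant term `±1`. If the
minimal polynomial of `μ` had odd degree, its stabiliser `H` in `Gal(L/ℚ)` would have odd index,
so a Sylow 2-subgroup `P` of `H` has odd index in `Gal(L/ℚ)`. Since the number of conjugates of
`λᵢ` is a power of 2, `P` acts transitively on them, and `∏_{σ ∈ P} σ λᵢ` is a power of the norm
`±1` of `λᵢ`. Hence `μ ^ |P| = ∏_{σ ∈ P} σ μ = ±1`: `μ` is a root of unity, whose minimal polynomial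
is cyclotomic of degree `φ(n)`, odd only for `μ = ±1`.
-/

open Polynomial

namespace Subgroup

variable {G : Type*} [Group G] {H K : Subgroup G}

theorem relIndex_eq_index_of_coprime [H.FiniteIndex] (h : H.index.Coprime K.index) :
    H.relIndex K = H.index := by
  have hdvd : H.index ∣ H.relIndex K * K.index := by
    rw [← inf_relIndex_right, relIndex_mul_index inf_le_right]
    exact index_dvd_of_le inf_le_left
  refine le_antisymm ?_ (Nat.le_of_dvd ?_ (h.dvd_of_dvd_mul_right hdvd))
  · rw [← relIndex_top_right]
    exact relIndex_le_of_le_right le_top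
      (by rw [relIndex_top_right]; exact FiniteIndex.index_ne_zero)
  · exact Nat.pos_of_ne_zero (FiniteIndex.index_ne_zero (H := H.subgroupOf K))

end Subgroup

namespace MulAction

variable {G X : Type*} [Group G] [MulAction G X]

theorem orbit_subgroup_eq_of_coprime_index {x : X} [(stabilizer G x).FiniteIndex]
    {P : Subgroup G} (h : (stabilizer G x).index.Coprime P.index) : orbit P x = orbit G x := by
  have hcard : (orbit G x).ncard = (orbit P x).ncard := by
    rw [← index_stabilizer, ← index_stabilizer, ← Subgroup.relIndex_eq_index_of_coprime h]
    rfl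
  refine Set.eq_of_subset_of_ncard_le (orbit_subgroup_subset P x) hcard.le ?_
  refine Set.finite_of_ncard_ne_zero ?_
  rw [← index_stabilizer]
  exact Subgroup.FiniteIndex.index_ne_zero

theorem prod_smul_eq_prod_orbit_pow {M : Type*} [CommMonoid M] [Fintype G] (f : X → M) (x : X)
    {s : Finset X} (hs : (s : Set X) = orbit G x) :
    ∏ g : G, f (g • x) = (∏ y ∈ s, f y) ^ Nat.card (stabilizer G x) := by
  classical
  have himage : (Finset.univ : Finset G).image (· • x) = s := by
    apply Finset.coe_injective
    rw [hs, Finset.coe_image, Finset.coe_univ, Set.image_univ]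
    rfl
  have hfiber (g₀ : G) :
      (Finset.univ.filter fun g : G => g • x = g₀ • x).card = Nat.card (stabilizer G x) := by
    rw [← Fintype.card_subtype, Nat.card_eq_fintype_card]
    refine Fintype.card_congr ((Equiv.mulLeft g₀⁻¹).subtypeEquiv fun g => ?_)
    simp [mul_smul, eq_inv_smul_iff, eq_comm]
  rw [Finset.prod_comp, himage, ← Finset.prod_pow]
  refine Finset.prod_congr rfl fun y hy => ?_
  obtain ⟨g₀, rfl⟩ : y ∈ orbit G x := hs ▸ hy
  rw [hfiber]

end MulAction

section Galois

variable {F L : Type*} [Field F] [Field L] [Algebra F L]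

theorem orbit_eq_rootSet_minpoly [Normal F L] (x : L) :
    MulAction.orbit Gal(L/F) x = (minpoly F x).rootSet L := by
  ext y
  rw [← isConjRoot_iff_mem_minpoly_rootSet (Algebra.IsIntegral.isIntegral x), IsConjRoot.comm,
    isConjRoot_iff_exists_algEquiv]
  rfl

theorem sq_prod_aroots_minpoly [Normal F L] (x : L) :
    ((minpoly F x).aroots L).prod ^ 2 = algebraMap F L ((minpoly F x).coeff 0 ^ 2) := by
  have hmonic := minpoly.monic (Algebra.IsIntegral.isIntegral (R := F) x)
  rw [map_pow, ← coeff_map, (Normal.splits inferInstance x).coeff_zero_eq_prod_roots_of_monic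
    (hmonic.map _), mul_pow, ← pow_mul, mul_comm _ 2, pow_mul, neg_one_sq, one_pow, one_mul]

variable [IsGalois F L]

theorem index_stabilizer_eq_natDegree_minpoly (x : L) :
    (MulAction.stabilizer Gal(L/F) x).index = (minpoly F x).natDegree := by
  rw [MulAction.index_stabilizer, orbit_eq_rootSet_minpoly, Set.ncard_eq_toFinset_card',
    Set.toFinset_card, card_rootSet_eq_natDegree (Algebra.IsSeparable.isSeparable F x)
      (Normal.splits inferInstance x)]

theorem sq_prod_subgroup_apply_eq_one {P : Subgroup Gal(L/F)} [Fintype P] (hP : Odd P.index)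
    {x : L} (hdeg : ∃ k, (minpoly F x).natDegree = 2 ^ k)
    (hcoeff : (minpoly F x).coeff 0 ^ 2 = 1) :
    (∏ σ : P, (σ : Gal(L/F)) x) ^ 2 = 1 := by
  classical
  obtain ⟨k, hk⟩ := hdeg
  have : (MulAction.stabilizer Gal(L/F) x).FiniteIndex :=
    ⟨by rw [index_stabilizer_eq_natDegree_minpoly, hk]; positivity⟩
  have horbit : MulAction.orbit P x = ((minpoly F x).aroots L).toFinset := by
    rw [← rootSet_def, ← orbit_eq_rootSet_minpoly]
    refine MulAction.orbit_subgroup_eq_of_coprime_index ?_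
    rw [index_stabilizer_eq_natDegree_minpoly, hk]
    exact (Nat.coprime_two_left.mpr hP).pow_left k
  have hprod : ∏ y ∈ ((minpoly F x).aroots L).toFinset, y = ((minpoly F x).aroots L).prod := by
    rw [Finset.prod_eq_multiset_prod, Multiset.toFinset_val, Multiset.dedup_eq_self.mpr
      (nodup_roots (Separable.map (Algebra.IsSeparable.isSeparable F x))), Multiset.map_id']
  rw [show ∏ σ : P, (σ : Gal(L/F)) x = ∏ σ : P, id (σ • x) from rfl,
    MulAction.prod_smul_eq_prod_orbit_pow id x horbit.symm]
  simp only [id, hprod]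
  rw [← pow_mul, mul_comm, pow_mul, sq_prod_aroots_minpoly, hcoeff, map_one, one_pow]

theorem isOfFinOrder_prod_zpow_of_odd_natDegree_minpoly [FiniteDimensional F L] {ι : Type*}
    [Fintype ι] (r : ι → L) (hdeg : ∀ i, ∃ k, (minpoly F (r i)).natDegree = 2 ^ k)
    (hcoeff : ∀ i, (minpoly F (r i)).coeff 0 ^ 2 = 1) (e : ι → ℤ)
    (hodd : Odd (minpoly F (∏ i, r i ^ e i)).natDegree) : IsOfFinOrder (∏ i, r i ^ e i) := by
  set μ := ∏ i, r i ^ e i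
  set H := MulAction.stabilizer Gal(L/F) μ
  obtain ⟨Q⟩ : Nonempty (Sylow 2 H) := Sylow.nonempty
  set P := (Q : Subgroup H).map H.subtype
  have hPH : P ≤ H := Subgroup.map_subtype_le _
  have hP : Odd P.index := by
    rw [Subgroup.index_map_subtype, index_stabilizer_eq_natDegree_minpoly]
    exact (Nat.odd_iff.mpr (Nat.two_dvd_ne_zero.mp Q.not_dvd_index)).mul hodd
  have : Fintype P := Fintype.ofFinite P
  have hfix : ∏ σ : P, (σ : Gal(L/F)) μ = μ ^ Fintype.card P := by
    rw [← Finset.card_univ, ← Finset.prod_const]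
    exact Finset.prod_congr rfl fun σ _ => hPH σ.2
  have hnorm : ∏ σ : P, (σ : Gal(L/F)) μ = ∏ i, (∏ σ : P, (σ : Gal(L/F)) (r i)) ^ e i := by
    simp only [μ, map_prod, map_zpow₀]
    rw [Finset.prod_comm]
    simp only [Finset.prod_zpow]
  refine isOfFinOrder_iff_pow_eq_one.mpr ⟨Fintype.card P * 2, by positivity, ?_⟩
  rw [pow_mul, ← hfix, hnorm, ← Finset.prod_pow]
  refine Finset.prod_eq_one fun i _ => ?_
  rw [← zpow_natCast, ← zpow_mul, mul_comm, zpow_mul, zpow_natCast,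
    sq_prod_subgroup_apply_eq_one hP (hdeg i) (hcoeff i), one_zpow]

end Galois

theorem Polynomial.isRoot_neg_coeff_zero_of_dvd {R : Type*} [CommRing R] {p q : R[X]}
    (hq : q.Monic) (hq1 : q.natDegree = 1) (hdvd : q ∣ p) : p.IsRoot (-q.coeff 0) := by
  refine IsRoot.dvd ?_ hdvd
  rw [hq.eq_X_add_C hq1]
  simp

section IntegralRoots

variable {R S : Type*} [CommRing R] [IsDomain R] [IsIntegrallyClosed R] [CommRing S] [IsDomain S]
  [Algebra R S] [Module.IsTorsionFree R S] {f : R[X]} {r : S}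

theorem isUnit_coeff_zero_minpoly (hf : f.Monic) (hf0 : IsUnit (f.coeff 0))
    (hr : aeval r f = 0) : IsUnit ((minpoly R r).coeff 0) := by
  obtain ⟨g, hfg⟩ := minpoly.isIntegrallyClosed_dvd ⟨f, hf, hr⟩ hr
  rw [hfg, mul_coeff_zero] at hf0
  exact isUnit_of_mul_isUnit_left hf0

theorem natDegree_minpoly_eq_two_or_four (hf : f.Monic) (hdeg : f.natDegree = 4)
    (hf0 : IsUnit (f.coeff 0)) (hunit : ∀ u : R, IsUnit u → ¬ f.IsRoot u) (hr : aeval r f = 0) :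
    (minpoly R r).natDegree = 2 ∨ (minpoly R r).natDegree = 4 := by
  have hint : IsIntegral R r := ⟨f, hf, hr⟩
  obtain ⟨g, hfg⟩ := minpoly.isIntegrallyClosed_dvd hint hr
  have hmonic := minpoly.monic hint
  have hg : g.Monic := hmonic.of_mul_monic_left (hfg ▸ hf)
  have hsum : (minpoly R r).natDegree + g.natDegree = 4 := by
    rw [← hdeg, hfg, hmonic.natDegree_mul hg]
  have hpos := minpoly.natDegree_pos hint
  rw [hfg, mul_coeff_zero] at hf0
  have hlinear (q : R[X]) (hq : q.Monic) (hq1 : q.natDegree = 1) (hq0 : IsUnit (q.coeff 0))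
      (hdvd : q ∣ f) : False :=
    hunit _ hq0.neg (isRoot_neg_coeff_zero_of_dvd hq hq1 hdvd)
  have hne_one : (minpoly R r).natDegree ≠ 1 := fun h1 =>
    hlinear _ hmonic h1 (isUnit_of_mul_isUnit_left hf0) ⟨g, hfg⟩
  have hne_three : g.natDegree ≠ 1 := fun h1 =>
    hlinear _ hg h1 (isUnit_of_mul_isUnit_right hf0) ⟨_, hfg.trans (mul_comm _ _)⟩
  omega

end IntegralRoots

section RationalMinpoly

variable {K : Type*} [Field K] [Algebra ℚ K] {f : ℤ[X]} {r : K}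

theorem minpoly_rat_eq_map_minpoly_int (hr : IsIntegral ℤ r) :
    minpoly ℚ r = (minpoly ℤ r).map (algebraMap ℤ ℚ) :=
  have := algebraRat.charZero K
  minpoly.isIntegrallyClosed_eq_field_fractions' ℚ hr

theorem sq_coeff_zero_minpoly_rat (hf : f.Monic) (hf0 : IsUnit (f.coeff 0))
    (hr : aeval r f = 0) : (minpoly ℚ r).coeff 0 ^ 2 = 1 := by
  have := algebraRat.charZero K
  rw [minpoly_rat_eq_map_minpoly_int ⟨f, hf, hr⟩, coeff_map]
  rcases Int.isUnit_iff.mp (isUnit_coeff_zero_minpoly hf hf0 hr) with h | h <;> simp [h]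

theorem natDegree_minpoly_rat_eq_two_pow (hf : f.Monic) (hdeg : f.natDegree = 4)
    (hf0 : IsUnit (f.coeff 0)) (hunit : ∀ u : ℤ, IsUnit u → ¬ f.IsRoot u) (hr : aeval r f = 0) :
    ∃ k, (minpoly ℚ r).natDegree = 2 ^ k := by
  have := algebraRat.charZero K
  rw [minpoly_rat_eq_map_minpoly_int ⟨f, hf, hr⟩, (minpoly.monic ⟨f, hf, hr⟩).natDegree_map]
  rcases natDegree_minpoly_eq_two_or_four hf hdeg hf0 hunit hr with h | h
  exacts [⟨1, h⟩, ⟨2, h⟩]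

end RationalMinpoly

theorem eq_one_or_eq_neg_one_of_odd_natDegree_minpoly {K : Type*} [Field K] [CharZero K] {μ : K}
    (hμ : IsOfFinOrder μ) (hodd : Odd (minpoly ℚ μ).natDegree) : μ = 1 ∨ μ = -1 := by
  have hprim := IsPrimitiveRoot.orderOf μ
  have hpos := hμ.orderOf_pos
  rw [← cyclotomic_eq_minpoly_rat hprim hpos, natDegree_cyclotomic,
    ← Nat.not_even_iff_odd] at hodd
  have hle : orderOf μ ≤ 2 := not_lt.mp fun h => hodd (Nat.totient_even h)
  interval_cases h : orderOf μ
  · exact Or.inl (IsPrimitiveRoot.one_right_iff.mp hprim)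
  · exact Or.inr hprim.eq_neg_one_of_two_right

theorem exists_isGalois_lift_complex_roots {f : ℤ[X]} (hf : f ≠ 0) :
    ∃ (L : Type) (_ : Field L) (_ : Algebra ℚ L) (_ : IsGalois ℚ L) (_ : FiniteDimensional ℚ L)
      (φ : L →ₐ[ℚ] ℂ), ∀ z : ℂ, aeval z f = 0 → ∃ r : L, aeval r f = 0 ∧ φ r = z := by
  set p := f.map (algebraMap ℤ ℚ)
  have hp : p ≠ 0 := (Polynomial.map_ne_zero_iff (algebraMap ℤ ℚ).injective_int).mpr hf
  let φ := SplittingField.lift p (IsAlgClosed.splits (p.map (algebraMap ℚ ℂ)))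
  -- instance search equips `p.SplittingField` with `DivisionRing.toRatAlgebra`, which is only
  -- defeq (not reducibly) to the algebra structure `SplittingField.instNormal` is stated for
  have : Normal ℚ p.SplittingField := SplittingField.instNormal p
  have : IsGalois ℚ p.SplittingField := IsGalois.mk
  refine ⟨p.SplittingField, inferInstance, inferInstance, inferInstance, inferInstance, φ,
    fun z hz => ?_⟩
  have hz' : z ∈ p.rootSet ℂ := by
    rw [mem_rootSet, aeval_map_algebraMap]
    exact ⟨hp, hz⟩
  obtain ⟨r, hr, rfl⟩ := ((SplittingField.splits p).image_rootSet φ).symm ▸ hz'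
  refine ⟨r, ?_, rfl⟩
  rw [mem_rootSet, aeval_map_algebraMap] at hr
  exact hr.2

theorem isOfFinOrder_prod_zpow_of_odd_natDegree_minpoly_complex {f : ℤ[X]} (hf : f.Monic)
    (hdeg : f.natDegree = 4) (hf0 : IsUnit (f.coeff 0)) (hunit : ∀ u : ℤ, IsUnit u → ¬ f.IsRoot u)
    {ι : Type*} [Fintype ι] (lam : ι → ℂ) (hlam : ∀ i, aeval (lam i) f = 0) (e : ι → ℤ)
    (hodd : Odd (minpoly ℚ (∏ i, lam i ^ e i)).natDegree) : IsOfFinOrder (∏ i, lam i ^ e i) := by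
  obtain ⟨L, _, _, _, _, φ, hlift⟩ := exists_isGalois_lift_complex_roots hf.ne_zero
  choose r hr hφr using fun i => hlift (lam i) (hlam i)
  have hφμ : φ (∏ i, r i ^ e i) = ∏ i, lam i ^ e i := by simp only [map_prod, map_zpow₀, hφr]
  rw [← hφμ, minpoly.algHom_eq φ φ.injective] at hodd
  have := algebraRat.charZero L
  exact hφμ ▸ (φ : L →* ℂ).isOfFinOrder (isOfFinOrder_prod_zpow_of_odd_natDegree_minpoly r
    (fun i => natDegree_minpoly_rat_eq_two_pow hf hdeg hf0 hunit (hr i))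
    (fun i => sq_coeff_zero_minpoly_rat hf hf0 (hr i)) e hodd)

/-- Let `f` be an Anosov polynomial of degree 4 (monic integer polynomial
with constant term ±1 and no roots of absolute value 1) with roots `lam 0, …, lam 3`, and
let `e : Fin 4 → ℤ` be such that `μ = ∏ lam i ^ e i` is not rational. Then the minimal
polynomial of `μ` over ℚ has even degree. -/
theorem stmt13 (f : Polynomial ℤ) (hf : f.Monic) (hdeg : f.natDegree = 4)
    (hconst : f.coeff 0 = 1 ∨ f.coeff 0 = -1)
    (lam : Fin 4 → ℂ)
    (hroots : (f.map (Int.castRingHom ℂ)).roots = Multiset.map lam Finset.univ.val)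
    (habs : ∀ i, ‖lam i‖ ≠ 1)
    (e : Fin 4 → ℤ) (μ : ℂ) (hμ : μ = ∏ i, lam i ^ e i)
    (hirrat : ∀ q : ℚ, μ ≠ (q : ℂ)) :
    Even (minpoly ℚ μ).natDegree := by
  have hroot_iff (z : ℂ) : aeval z f = 0 ↔ ∃ i, lam i = z := by
    rw [aeval_def, algebraMap_int_eq,
      ← mem_roots_map_of_injective (RingHom.injective_int _) hf.ne_zero, hroots]
    simp only [Multiset.mem_map, Finset.mem_val, Finset.mem_univ, true_and]
  have hunit (u : ℤ) (hu : IsUnit u) (hu_root : f.IsRoot u) : False := by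
    obtain ⟨i, hi⟩ := (hroot_iff u).mp (by
      rw [← eq_intCast (algebraMap ℤ ℂ), aeval_algebraMap_apply, coe_aeval_eq_eval,
        hu_root.eq_zero, map_zero])
    rcases Int.isUnit_iff.mp hu with rfl | rfl <;> exact habs i (by simp [hi])
  rw [← Nat.not_odd_iff_even]
  intro hodd
  have hfin : IsOfFinOrder μ := hμ ▸ isOfFinOrder_prod_zpow_of_odd_natDegree_minpoly_complex hf hdeg
    (Int.isUnit_iff.mpr hconst) hunit lam (fun i => (hroot_iff _).mpr ⟨i, rfl⟩) e (hμ ▸ hodd)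
  rcases eq_one_or_eq_neg_one_of_odd_natDegree_minpoly hfin hodd with rfl | rfl
  · exact hirrat 1 (by simp)
  · exact hirrat (-1) (by simp)
end

section
/- Let g be an Anosov polynomial of degree 4 with roots λ_1, …, λ_4 and let i ≥ 2. Then every i-fold product λ_{j_1}λ_{j_2}⋯λ_{j_i} of roots of g that is an algebraic unit of absolute value ≠ 1 has minimal polynomial over ℚ of even degree. Consequently, any monic integer polynomial all of whose roots are such i-fold products has even degree. -/
open Polynomial IntermediateField

set_option linter.unusedSectionVars false
set_option maxHeartbeats 1000000
set_option synthInstance.maxHeartbeats 400000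


/-- Product over a finite group of `f (σ • x)`, grouped by orbit. -/
lemma prod_smul_group' {Γ : Type*} [Group Γ] [Fintype Γ] {X : Type*} [DecidableEq X] [MulAction Γ X]
    (x : X) (f : X → ℝ) :
    ∏ σ : Γ, f (σ • x) =
      (∏ ν ∈ Finset.image (fun σ : Γ => σ • x) Finset.univ, f ν) ^
        Nat.card (MulAction.stabilizer Γ x) := by
  classical
  rw [Finset.prod_comp f (fun σ : Γ => σ • x), ← Finset.prod_pow]
  refine Finset.prod_congr rfl ?_
  intro b hb
  congr 1
  obtain ⟨σ0, -, hσ0⟩ := Finset.mem_image.mp hb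
  have hcard : (Finset.univ.filter fun σ : Γ => σ • x = b).card
      = (Finset.univ.filter fun σ : Γ => σ • x = x).card := by
    refine Finset.card_bij' (fun σ _ => σ0⁻¹ * σ) (fun τ _ => σ0 * τ) ?_ ?_ ?_ ?_
    · intro a ha
      simp only [Finset.mem_filter, Finset.mem_univ, true_and] at ha ⊢
      rw [mul_smul, ha, ← hσ0, inv_smul_smul]
    · intro a ha
      simp only [Finset.mem_filter, Finset.mem_univ, true_and] at ha ⊢
      rw [mul_smul, ha, hσ0]
    · intro a _; group
    · intro a _; group
  rw [hcard, Nat.card_eq_fintype_card, Fintype.card_subtype]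
  rfl


lemma stab_eq_fixingSubgroup' {F E : Type*} [Field F] [Field E] [Algebra F E] (x : E) :
    MulAction.stabilizer (E ≃ₐ[F] E) x = (IntermediateField.adjoin F {x}).fixingSubgroup := by
  ext σ
  rw [MulAction.mem_stabilizer_iff, IntermediateField.mem_fixingSubgroup_iff]
  constructor
  · intro h y hy
    induction hy using IntermediateField.adjoin_induction with
    | mem z hz => rw [Set.mem_singleton_iff.mp hz]; exact h
    | algebraMap z => exact σ.commutes z
    | add a b _ _ ha hb => rw [map_add, ha, hb]
    | inv a _ ha =>
        show σ a⁻¹ = a⁻¹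
        rw [map_inv₀]
        exact congrArg (·⁻¹) ha
    | mul a b _ _ ha hb =>
        show σ (a * b) = a * b
        rw [map_mul]
        exact congrArg₂ (· * ·) ha hb
  · intro h
    exact h x (IntermediateField.mem_adjoin_simple_self F x)

lemma orbit_card_eq_minpoly_natDegree' {F E : Type*} [Field F] [Field E] [Algebra F E]
    [FiniteDimensional F E] [IsGalois F E] (x : E) :
    Nat.card (MulAction.orbit (E ≃ₐ[F] E) x) = (minpoly F x).natDegree := by
  classical
  have hx : IsIntegral F x := IsIntegral.of_finite F x
  have h1 : Nat.card (MulAction.orbit (E ≃ₐ[F] E) x)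
      = (MulAction.stabilizer (E ≃ₐ[F] E) x).index :=
    Nat.card_congr (MulAction.orbitEquivQuotientStabilizer _ x)
  have h2 := (MulAction.stabilizer (E ≃ₐ[F] E) x).index_mul_card
  have h3 : Nat.card (MulAction.stabilizer (E ≃ₐ[F] E) x)
      = Module.finrank F⟮x⟯ E := by
    rw [stab_eq_fixingSubgroup']
    rw [Nat.card_congr (IntermediateField.fixingSubgroupEquiv F⟮x⟯).toEquiv]
    rw [Nat.card_eq_fintype_card]
    rw [← Nat.card_eq_fintype_card]; exact IsGalois.card_aut_eq_finrank F⟮x⟯ E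
  have h4 : Nat.card (E ≃ₐ[F] E) = Module.finrank F E := by
    rw [Nat.card_eq_fintype_card]; rw [← Nat.card_eq_fintype_card]; exact IsGalois.card_aut_eq_finrank F E
  have h5 : Module.finrank F F⟮x⟯ * Module.finrank F⟮x⟯ E = Module.finrank F E :=
    Module.finrank_mul_finrank F F⟮x⟯ E
  have h6 : Module.finrank F F⟮x⟯ = (minpoly F x).natDegree :=
    IntermediateField.adjoin.finrank hx
  have hpos : 0 < Module.finrank F⟮x⟯ E := Module.finrank_pos
  rw [h1]
  have := h2
  rw [h3, h4, ← h5, h6] at this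
  exact Nat.eq_of_mul_eq_mul_right hpos this

lemma mem_bot_of_fixed' {F E : Type*} [Field F] [Field E] [Algebra F E]
    [FiniteDimensional F E] [IsGalois F E] (y : E) (h : ∀ σ : E ≃ₐ[F] E, σ y = y) :
    y ∈ (⊥ : IntermediateField F E) := by
  rw [← IsGalois.fixedField_fixingSubgroup (⊥ : IntermediateField F E)]
  intro σ
  exact h σ

lemma abs_eq_one_of_rat' {z : ℂ} (hz : z ≠ 0) (h1 : IsIntegral ℤ z) (h2 : IsIntegral ℤ z⁻¹)
    (r : ℚ) (hr : (r : ℂ) = z) : ‖z‖ = 1 := by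
  have hrne : r ≠ 0 := by rintro rfl; exact hz (by simpa using hr.symm)
  have key : ∀ s : ℚ, IsIntegral ℤ ((s : ℂ)) → ∃ n : ℤ, (n : ℚ) = s := by
    intro s hs
    have : IsIntegral ℤ s := by
      rw [← isIntegral_algebraMap_iff (algebraMap ℚ ℂ).injective]
      simpa using hs
    obtain ⟨n, hn⟩ := IsIntegrallyClosed.isIntegral_iff.mp this
    exact ⟨n, hn⟩
  obtain ⟨n, hn⟩ := key r (hr ▸ h1)
  obtain ⟨m, hm⟩ := key r⁻¹ (by rw [Rat.cast_inv, hr]; exact h2)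
  have hmul : (n : ℚ) * m = 1 := by rw [hn, hm, mul_inv_cancel₀ hrne]
  have : n * m = 1 := by exact_mod_cast hmul
  rcases Int.isUnit_iff.mp (IsUnit.of_mul_eq_one _ this) with h | h
  · rw [← hr, ← hn, h]; simp
  · rw [← hr, ← hn, h]; simp


section crux
variable (g : Polynomial ℤ) (hg : g.Monic) (hdeg : g.natDegree = 4)
    (hconst : g.coeff 0 = 1 ∨ g.coeff 0 = -1)
    (lam : Fin 4 → ℂ)
    (hroots : (g.map (Int.castRingHom ℂ)).roots = Multiset.map lam Finset.univ.val)
    (habs : ∀ i, ‖lam i‖ ≠ 1)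

include hg hdeg hconst hroots habs in
lemma gc_facts' :
    (g.map (Int.castRingHom ℂ)) ≠ 0 ∧
    (∀ k, (g.map (Int.castRingHom ℂ)).IsRoot (lam k)) ∧
    (∏ k, lam k = 1 ∨ ∏ k, lam k = -1) := by

  set gc := g.map (Int.castRingHom ℂ) with hgc
  have hgcm : gc.Monic := hg.map _
  have hgc0 : gc ≠ 0 := hgcm.ne_zero
  refine ⟨hgc0, ?_, ?_⟩
  · intro k
    have : lam k ∈ gc.roots := by
      rw [hroots]
      exact Multiset.mem_map_of_mem lam (Finset.mem_univ_val k)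
    exact (mem_roots hgc0).mp this
  · have hsplit : gc.Splits := IsAlgClosed.splits gc
    have hco := hsplit.coeff_zero_eq_prod_roots_of_monic hgcm
    have hnd : gc.natDegree = 4 := by
      rw [hgc, hg.natDegree_map, hdeg]
    have hprod : gc.roots.prod = ∏ k, lam k := by
      rw [hroots, Finset.prod_eq_multiset_prod]
    have hc0 : gc.coeff 0 = ((g.coeff 0 : ℤ) : ℂ) := by
      rw [hgc, coeff_map]; rfl
    rw [hnd, hc0, hprod] at hco
    rcases hconst with h | h <;> [left; right] <;>
      · rw [h] at hco
        push_cast at hco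
        linear_combination -hco


include hg hdeg hconst hroots habs in
lemma root_facts' :
    ∀ z ∈ (g.map (Int.castRingHom ℂ)).roots,
      z ≠ 0 ∧ IsIntegral ℤ z ∧ IsIntegral ℤ z⁻¹ := by
  obtain ⟨hgc0, hroot, hprod⟩ := gc_facts' g hg hdeg hconst lam hroots habs
  have hint : ∀ k, IsIntegral ℤ (lam k) := by
    intro k
    refine ⟨g, hg, ?_⟩
    rw [← Polynomial.eval_map]
    exact hroot k
  have hε : (∏ k, lam k) * (∏ k, lam k) = 1 := by
    rcases hprod with h | h <;> rw [h] <;> ring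
  have hne : ∀ k, lam k ≠ 0 := by
    intro k hk
    rw [Finset.prod_eq_zero (Finset.mem_univ k) hk] at hprod
    simpa using hprod
  intro z hz
  rw [hroots] at hz
  obtain ⟨k, -, rfl⟩ := Multiset.mem_map.mp hz
  refine ⟨hne k, hint k, ?_⟩
  -- (lam k)⁻¹ = (∏ all) * (∏ all erase k) ... show it's in the integral closure
  have hmul : lam k * ((∏ m, lam m) * ∏ m ∈ Finset.univ.erase k, lam m) = 1 := by
    have h1 : lam k * ∏ m ∈ Finset.univ.erase k, lam m = ∏ m, lam m :=
      Finset.mul_prod_erase Finset.univ lam (Finset.mem_univ k)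
    calc lam k * ((∏ m, lam m) * ∏ m ∈ Finset.univ.erase k, lam m)
        = (∏ m, lam m) * (lam k * ∏ m ∈ Finset.univ.erase k, lam m) := by ring
      _ = (∏ m, lam m) * (∏ m, lam m) := by rw [h1]
      _ = 1 := hε
  rw [inv_eq_of_mul_eq_one_right hmul]
  have hmem : ∀ m, lam m ∈ integralClosure ℤ ℂ := fun m => hint m
  have : (∏ m, lam m) * ∏ m ∈ Finset.univ.erase k, lam m ∈ integralClosure ℤ ℂ := by
    exact mul_mem (prod_mem fun m _ => hmem m) (prod_mem fun m _ => hmem m)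
  exact this

include hg hdeg hconst hroots habs in
lemma no_rat_root' :
    ∀ r : ℚ, ((r : ℂ) ∈ (g.map (Int.castRingHom ℂ)).roots) → False := by
  intro r hr
  have h2 := hr
  rw [hroots] at h2
  obtain ⟨k, -, hk⟩ := Multiset.mem_map.mp h2
  obtain ⟨hne, hint, hinv⟩ := root_facts' g hg hdeg hconst lam hroots habs _ hr
  exact habs k (hk ▸ abs_eq_one_of_rat' (hk ▸ hne) (hk ▸ hint) (hk ▸ hinv) r rfl)

include hg hdeg hconst hroots habs in
lemma crux {ι : Type} [Fintype ι] (j : ι → Fin 4)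
    (hne : ‖∏ t, lam (j t)‖ ≠ 1) :
    Even (minpoly ℚ (∏ t, lam (j t))).natDegree := by
  classical
  by_contra hodd
  obtain ⟨hgc0, hroot, hprod⟩ := gc_facts' g hg hdeg hconst lam hroots habs
  have hrootfacts := root_facts' g hg hdeg hconst lam hroots habs
  have hnorat := no_rat_root' g hg hdeg hconst lam hroots habs
  set gc := g.map (Int.castRingHom ℂ) with hgc
  set gq := g.map (Int.castRingHom ℚ) with hgq
  have hmapmap : gq.map (algebraMap ℚ ℂ) = gc := by
    have he : (algebraMap ℚ ℂ).comp (Int.castRingHom ℚ) = Int.castRingHom ℂ :=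
      Subsingleton.elim _ _
    rw [hgq, hgc, Polynomial.map_map, he]
  have hgqm : gq.Monic := hg.map _
  have hgq0 : gq ≠ 0 := hgqm.ne_zero
  have hgqdeg : gq.natDegree = 4 := by rw [hgq, hg.natDegree_map, hdeg]
  have haev : ∀ k, aeval (lam k) gq = 0 := by
    intro k
    rw [aeval_def, ← Polynomial.eval_map, hmapmap]
    exact hroot k
  have hsplits : (gq.map (algebraMap ℚ ℂ)).Splits := IsAlgClosed.splits _
  set L := IntermediateField.adjoin ℚ (gq.rootSet ℂ) with hLdef
  haveI hLsf : gq.IsSplittingField ℚ L :=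
    IntermediateField.adjoin_rootSet_isSplittingField hsplits
  haveI : FiniteDimensional ℚ L := IsSplittingField.finiteDimensional L gq
  haveI : Normal ℚ L := Normal.of_isSplittingField gq
  haveI : IsGalois ℚ L := ⟨⟩
  have hmemL : ∀ k, lam k ∈ L := fun k =>
    IntermediateField.subset_adjoin ℚ _ (mem_rootSet.mpr ⟨hgq0, haev k⟩)
  set lamL : Fin 4 → L := fun k => ⟨lam k, hmemL k⟩ with hlamL
  set β := ∏ t, lam (j t) with hβ
  set B : L := ∏ t, lamL (j t) with hB
  have hBβ : (B : ℂ) = β := by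
    rw [hB, hβ]
    exact map_prod (algebraMap L ℂ) _ _
  have hvalinj : Function.Injective (L.val : L →ₐ[ℚ] ℂ) := fun a b hab => Subtype.ext hab
  have hminpoly : minpoly ℚ β = minpoly ℚ B := by
    rw [← hBβ]
    exact minpoly.algHom_eq L.val hvalinj B
  set H := MulAction.stabilizer (L ≃ₐ[ℚ] L) B with hH
  set d := (minpoly ℚ β).natDegree with hd
  have hdeq : H.index = d := by
    rw [hd, hminpoly, ← orbit_card_eq_minpoly_natDegree' B]
    exact (Nat.card_congr (MulAction.orbitEquivQuotientStabilizer (L ≃ₐ[ℚ] L) B)).symm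
  have hd_odd : ¬ 2 ∣ d := by
    intro h2
    exact hodd (even_iff_two_dvd.mpr h2)
  haveI : Fact (Nat.Prime 2) := ⟨Nat.prime_two⟩
  obtain ⟨P⟩ : Nonempty (Sylow 2 H) := inferInstance
  set v := (Nat.card (L ≃ₐ[ℚ] L)).factorization 2 with hv
  have hHG : d * Nat.card H = Nat.card (L ≃ₐ[ℚ] L) := by
    rw [← hdeq]; exact H.index_mul_card
  have hH0 : Nat.card H ≠ 0 := Nat.card_pos.ne'
  have hG0 : Nat.card (L ≃ₐ[ℚ] L) ≠ 0 := Nat.card_pos.ne'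
  have hd0 : d ≠ 0 := by
    intro h0
    rw [h0, zero_mul] at hHG
    exact hG0 hHG.symm
  have hvH : (Nat.card H).factorization 2 = v := by
    rw [hv, ← hHG, Nat.factorization_mul hd0 hH0, Finsupp.add_apply,
      Nat.factorization_eq_zero_of_not_dvd hd_odd, zero_add]
  have hPcard : Nat.card P = 2 ^ v := by rw [P.card_eq_multiplicity, hvH]
  set P' : Subgroup (L ≃ₐ[ℚ] L) := (P : Subgroup H).map H.subtype with hP'def
  have hP'B : ∀ σ : P', (σ : L ≃ₐ[ℚ] L) • B = B := by
    rintro ⟨σ, hσ⟩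
    obtain ⟨τ, -, rfl⟩ := hσ
    exact τ.2
  have hP'card : Nat.card P' = 2 ^ v := by
    rw [← hPcard]
    exact (Nat.card_congr ((P : Subgroup H).equivMapOfInjective H.subtype
      H.subtype_injective).toEquiv).symm
  -- the key fact, for each root
  have key : ∀ k : Fin 4, ∏ σ : P', ‖((σ • lamL k : L) : ℂ)‖ = 1 := by
    intro k
    set x := lamL k with hx
    have hxmin : minpoly ℚ (lam k) = minpoly ℚ x := minpoly.algHom_eq L.val hvalinj x
    have hlammem : lam k ∈ gc.roots := by
      rw [hroots]; exact Multiset.mem_map_of_mem lam (Finset.mem_univ_val k)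
    have hlamfacts := hrootfacts _ hlammem
    have hxintQ : IsIntegral ℚ (lam k) := hlamfacts.2.1.tower_top
    set m := (minpoly ℚ (lam k)).natDegree with hm
    have hdvd : minpoly ℚ (lam k) ∣ gq := minpoly.dvd ℚ _ (haev k)
    have hm4 : m ≤ 4 := hgqdeg ▸ natDegree_le_of_dvd hdvd hgq0
    have hm0 : 0 < m := minpoly.natDegree_pos hxintQ
    have hm1 : m ≠ 1 := by
      intro h1
      obtain ⟨r, hr⟩ := minpoly.natDegree_eq_one_iff.mp h1
      apply hnorat r
      have hre : (r : ℂ) = lam k := by rw [← hr]; rfl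
      rw [hre]
      exact hlammem
    have hm3 : m ≠ 3 := by
      intro h3
      obtain ⟨c, hc⟩ := hdvd
      have hcm : c.Monic := (minpoly.monic hxintQ).of_mul_monic_left (hc ▸ hgqm)
      have hc0 : c ≠ 0 := hcm.ne_zero
      have hcdeg : c.natDegree = 1 := by
        have hnd := natDegree_mul (minpoly.ne_zero hxintQ) hc0
        rw [← hc, hgqdeg] at hnd
        rw [← hm] at hnd
        omega
      have hceq : c = X + C (c.coeff 0) := hcm.eq_X_add_C hcdeg
      have hqroot : gq.eval (-(c.coeff 0)) = 0 := by
        rw [hc, eval_mul, hceq]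
        simp
      apply hnorat (-(c.coeff 0))
      rw [mem_roots hgc0]
      show gc.eval _ = 0
      rw [← hmapmap, Polynomial.eval_map]
      have heq : (((-(c.coeff 0) : ℚ)) : ℂ) = algebraMap ℚ ℂ (-(c.coeff 0)) := rfl
      rw [heq, Polynomial.eval₂_at_apply, hqroot, map_zero]
    have hm24 : m = 2 ∨ m = 4 := by omega
    obtain ⟨a, hma⟩ : ∃ a, m = 2 ^ a := by
      rcases hm24 with h | h
      · exact ⟨1, by omega⟩
      · exact ⟨2, by omega⟩
    have hxorb : Nat.card (MulAction.orbit (L ≃ₐ[ℚ] L) x) = m := by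
      rw [orbit_card_eq_minpoly_natDegree' x, hm, hxmin]
    set S := MulAction.stabilizer (L ≃ₐ[ℚ] L) x with hS
    have hSG : m * Nat.card S = Nat.card (L ≃ₐ[ℚ] L) := by
      rw [← hxorb, Nat.card_congr (MulAction.orbitEquivQuotientStabilizer (L ≃ₐ[ℚ] L) x)]
      exact S.index_mul_card
    have hS0 : Nat.card S ≠ 0 := Nat.card_pos.ne'
    set sf := (Nat.card S).factorization 2 with hsf
    have hvsum : v = a + sf := by
      rw [hv, ← hSG, Nat.factorization_mul (by omega : m ≠ 0) hS0, Finsupp.add_apply, hma,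
        Nat.Prime.factorization_pow Nat.prime_two, Finsupp.single_eq_same]
    set w := Nat.card (MulAction.stabilizer P' x) with hwdef
    have hwP : Nat.card (MulAction.orbit P' x) * w = 2 ^ v := by
      rw [hwdef, Nat.card_congr (MulAction.orbitEquivQuotientStabilizer P' x), ← hP'card]
      exact (MulAction.stabilizer P' x).index_mul_card
    have hwdvd2 : w ∣ 2 ^ v := by
      rw [← hP'card]; exact Subgroup.card_subgroup_dvd_card _
    have hwdvdS : w ∣ Nat.card S := by
      let f : MulAction.stabilizer P' x →* S :=
        { toFun := fun σ => ⟨((σ : P') : L ≃ₐ[ℚ] L), σ.2⟩,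
          map_one' := rfl,
          map_mul' := fun _ _ => rfl }
      have hfinj : Function.Injective f := by
        intro σ τ hστ
        have h2 : ((σ : P') : L ≃ₐ[ℚ] L) = ((τ : P') : L ≃ₐ[ℚ] L) :=
          congrArg (fun y : S => (y : L ≃ₐ[ℚ] L)) hστ
        exact Subtype.ext (Subtype.ext h2)
      exact Subgroup.card_dvd_of_injective f hfinj
    obtain ⟨b, -, hwb⟩ := (Nat.dvd_prime_pow Nat.prime_two).mp hwdvd2
    have hble : b ≤ sf :=
      (Nat.Prime.pow_dvd_iff_le_factorization Nat.prime_two hS0).mp (hwb ▸ hwdvdS)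
    have hsubset : MulAction.orbit P' x ⊆ MulAction.orbit (L ≃ₐ[ℚ] L) x := by
      rintro y ⟨σ, rfl⟩
      exact ⟨(σ : L ≃ₐ[ℚ] L), rfl⟩
    have hfinG : (MulAction.orbit (L ≃ₐ[ℚ] L) x).Finite := Set.finite_range _
    have hcardle : Nat.card (MulAction.orbit P' x) ≤ m := by
      rw [← hxorb, Nat.card_coe_set_eq, Nat.card_coe_set_eq]
      exact Set.ncard_le_ncard hsubset hfinG
    have hcardeq : Nat.card (MulAction.orbit P' x) = m := by
      have e1 : Nat.card (MulAction.orbit P' x) * 2 ^ b = 2 ^ v := by rw [← hwb]; exact hwP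
      have e2 : Nat.card (MulAction.orbit P' x) * 2 ^ b ≤ m * 2 ^ b :=
        Nat.mul_le_mul_right _ hcardle
      have e3 : m * 2 ^ b ≤ 2 ^ v := by
        rw [hma, ← pow_add]
        exact Nat.pow_le_pow_right (by norm_num) (by omega)
      have e5 : (0:ℕ) < 2 ^ b := Nat.pow_pos (by norm_num)
      have e4 : Nat.card (MulAction.orbit P' x) * 2 ^ b = m * 2 ^ b := by omega
      exact Nat.eq_of_mul_eq_mul_right e5 e4
    have hFGcoe : ((Finset.image (fun σ : (L ≃ₐ[ℚ] L) => σ • x) Finset.univ : Finset L) : Set L)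
        = MulAction.orbit (L ≃ₐ[ℚ] L) x := by
      rw [Finset.coe_image, Finset.coe_univ, Set.image_univ]; rfl
    have hFPcoe : ((Finset.image (fun σ : P' => σ • x) Finset.univ : Finset L) : Set L)
        = MulAction.orbit P' x := by
      rw [Finset.coe_image, Finset.coe_univ, Set.image_univ]; rfl
    have hFGcard : (Finset.image (fun σ : (L ≃ₐ[ℚ] L) => σ • x) Finset.univ).card = m := by
      rw [← hxorb, ← hFGcoe, Nat.card_coe_set_eq, Set.ncard_coe_finset]
    have hFPcard : (Finset.image (fun σ : P' => σ • x) Finset.univ).card = m := by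
      rw [← hcardeq, ← hFPcoe, Nat.card_coe_set_eq, Set.ncard_coe_finset]
    have hFPsub : Finset.image (fun σ : P' => σ • x) Finset.univ
        ⊆ Finset.image (fun σ : (L ≃ₐ[ℚ] L) => σ • x) Finset.univ := by
      intro ν hν
      rw [← Finset.mem_coe, hFPcoe] at hν
      rw [← Finset.mem_coe, hFGcoe]
      exact hsubset hν
    have hFPG : Finset.image (fun σ : P' => σ • x) Finset.univ
        = Finset.image (fun σ : (L ≃ₐ[ℚ] L) => σ • x) Finset.univ :=
      Finset.eq_of_subset_of_card_le hFPsub (by rw [hFGcard, hFPcard])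
    have hFGroot : ∀ ν ∈ Finset.image (fun σ : (L ≃ₐ[ℚ] L) => σ • x) Finset.univ,
        (ν : ℂ) ∈ gc.roots := by
      intro ν hν
      obtain ⟨σ, -, rfl⟩ := Finset.mem_image.mp hν
      have hx0 : aeval x gq = 0 := by
        apply hvalinj
        rw [map_zero, ← aeval_algHom_apply L.val x gq]
        exact haev k
      have h1 : aeval (σ • x) gq = 0 := by
        show aeval (σ x) gq = 0
        rw [aeval_algHom_apply σ x gq, hx0, map_zero]
      have h2 : aeval ((σ • x : L) : ℂ) gq = 0 := by
        rw [show ((σ • x : L) : ℂ) = L.val (σ • x) from rfl, aeval_algHom_apply L.val]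
        exact (congrArg L.val h1).trans (map_zero _)
      rw [mem_roots hgc0]
      show gc.eval _ = 0
      rw [← hmapmap, Polynomial.eval_map, ← aeval_def]
      exact h2
    have hprodFG : ∏ ν ∈ Finset.image (fun σ : (L ≃ₐ[ℚ] L) => σ • x) Finset.univ,
        ‖(ν : ℂ)‖ = 1 := by
      set ρ : L := ∏ ν ∈ Finset.image (fun σ : (L ≃ₐ[ℚ] L) => σ • x) Finset.univ, ν with hρdef
      have hfixρ : ∀ σ : (L ≃ₐ[ℚ] L), σ ρ = ρ := by
        intro σ
        rw [hρdef, map_prod]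
        have hinj : Set.InjOn (fun ν : L => σ • ν)
            (Finset.image (fun σ : (L ≃ₐ[ℚ] L) => σ • x) Finset.univ) :=
          fun p _ q _ h => MulAction.injective σ h
        have himg : (Finset.image (fun σ : (L ≃ₐ[ℚ] L) => σ • x) Finset.univ).image
            (fun ν : L => σ • ν) = Finset.image (fun σ : (L ≃ₐ[ℚ] L) => σ • x) Finset.univ := by
          apply Finset.eq_of_subset_of_card_le
          · intro ν hν
            obtain ⟨μ, hμ, rfl⟩ := Finset.mem_image.mp hν
            obtain ⟨τ, -, rfl⟩ := Finset.mem_image.mp hμ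
            refine Finset.mem_image.mpr ⟨σ * τ, Finset.mem_univ _, ?_⟩
            rw [mul_smul]
          · rw [Finset.card_image_of_injOn hinj]
        have hpi := Finset.prod_image (f := fun ν : L => ν) (g := fun ν : L => σ • ν)
          (s := Finset.image (fun σ : (L ≃ₐ[ℚ] L) => σ • x) Finset.univ)
          (fun p _ q _ h => MulAction.injective σ h)
        rw [himg] at hpi
        exact hpi.symm
      obtain ⟨r, hr⟩ := IntermediateField.mem_bot.mp (mem_bot_of_fixed' ρ hfixρ)
      have hρc : ((ρ : L) : ℂ)
          = ∏ ν ∈ Finset.image (fun σ : (L ≃ₐ[ℚ] L) => σ • x) Finset.univ, (ν : ℂ) :=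
        map_prod (algebraMap L ℂ) _ _
      have hρne : ((ρ : L) : ℂ) ≠ 0 := by
        rw [hρc]
        apply Finset.prod_ne_zero_iff.mpr
        intro ν hν
        exact (hrootfacts _ (hFGroot ν hν)).1
      have hρint : IsIntegral ℤ ((ρ : L) : ℂ) := by
        rw [hρc]
        show _ ∈ integralClosure ℤ ℂ
        exact prod_mem fun ν hν => (hrootfacts _ (hFGroot ν hν)).2.1
      have hρinv : IsIntegral ℤ (((ρ : L) : ℂ))⁻¹ := by
        rw [hρc, ← Finset.prod_inv_distrib]
        show _ ∈ integralClosure ℤ ℂ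
        exact prod_mem fun ν hν => (hrootfacts _ (hFGroot ν hν)).2.2
      have hρrat : ((r : ℚ) : ℂ) = ((ρ : L) : ℂ) := by
        rw [← hr]
        exact (IsScalarTower.algebraMap_apply ℚ L ℂ r).symm
      have habs1 := abs_eq_one_of_rat' hρne hρint hρinv r hρrat
      rw [hρc, norm_prod] at habs1
      exact habs1
    have hps := prod_smul_group' (Γ := P') x (fun ν : L => ‖(ν : ℂ)‖)
    rw [hFPG, hprodFG, one_pow] at hps
    exact hps
  -- assemble
  have hfinal : ∏ σ : P', ‖((σ • B : L) : ℂ)‖ = 1 := by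
    have hswap : ∀ σ : P', ‖((σ • B : L) : ℂ)‖
        = ∏ t, ‖((σ • lamL (j t) : L) : ℂ)‖ := by
      intro σ
      have h1 : σ • B = ∏ t, (σ • lamL (j t) : L) := by
        show (σ : L ≃ₐ[ℚ] L) • B = _
        rw [hB]
        exact map_prod (σ : L ≃ₐ[ℚ] L) _ _
      have h2 : ((∏ t, (σ • lamL (j t)) : L) : ℂ) = ∏ t, ((σ • lamL (j t) : L) : ℂ) :=
        map_prod (algebraMap L ℂ) _ _
      rw [h1, h2]
      exact norm_prod _ _
    calc ∏ σ : P', ‖((σ • B : L) : ℂ)‖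
        = ∏ σ : P', ∏ t, ‖((σ • lamL (j t) : L) : ℂ)‖ :=
          Finset.prod_congr rfl (fun σ _ => hswap σ)
      _ = ∏ t, ∏ σ : P', ‖((σ • lamL (j t) : L) : ℂ)‖ := Finset.prod_comm
      _ = ∏ t : ι, (1 : ℝ) := Finset.prod_congr rfl (fun t _ => key (j t))
      _ = 1 := Finset.prod_const_one
  have hconstval : ∀ σ : P', ‖((σ • B : L) : ℂ)‖ = ‖β‖ := by
    intro σ
    have : σ • B = B := hP'B σ
    rw [this, hBβ]
  rw [Finset.prod_congr rfl (fun σ _ => hconstval σ), Finset.prod_const] at hfinal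
  have hcardP'univ : (Finset.univ : Finset P').card = 2 ^ v := by
    rw [Finset.card_univ, ← Nat.card_eq_fintype_card, hP'card]
  rw [hcardP'univ] at hfinal
  have hN : (2:ℕ) ^ v ≠ 0 := pow_ne_zero _ two_ne_zero
  have h0 : (0:ℝ) ≤ ‖β‖ := norm_nonneg β
  rcases lt_trichotomy (‖β‖) 1 with hlt | heq | hgt
  · have := pow_lt_one₀ h0 hlt hN
    rw [hfinal] at this
    exact absurd this (lt_irrefl 1)
  · exact hne heq
  · have := one_lt_pow₀ hgt hN
    rw [hfinal] at this
    exact absurd this (lt_irrefl 1)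
include hg hdeg hconst hroots habs in
lemma part2_aux (i : ℕ) : ∀ n (q : Polynomial ℤ), q.natDegree = n → q.Monic →
    (∀ z ∈ (q.map (Int.castRingHom ℂ)).roots,
        ‖z‖ ≠ 1 ∧ ∃ j : Fin i → Fin 4, z = ∏ t, lam (j t)) →
    Even n := by
  intro n
  induction n using Nat.strong_induction_on with
  | _ n IH =>
    intro q hqn hq hprop
    rcases Nat.eq_zero_or_pos n with h0 | hpos
    · rw [h0]; exact Even.zero
    · have hqm : (q.map (Int.castRingHom ℂ)).Monic := hq.map _
      have hqmne : q.map (Int.castRingHom ℂ) ≠ 0 := hqm.ne_zero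
      have hqc : (q.map (Int.castRingHom ℂ)).natDegree = n := by
        rw [hq.natDegree_map, hqn]
      have hdegpos : 0 < (q.map (Int.castRingHom ℂ)).degree := by
        rw [degree_eq_natDegree hqmne, hqc]
        exact_mod_cast hpos
      obtain ⟨z, hz⟩ := Complex.exists_root hdegpos
      have hzmem : z ∈ (q.map (Int.castRingHom ℂ)).roots := (mem_roots hqmne).mpr hz
      obtain ⟨habs1, jj, hjj⟩ := hprop z hzmem
      have hzint : IsIntegral ℤ z := ⟨q, hq, by rw [← Polynomial.eval_map]; exact hz⟩
      have haevz : aeval z q = 0 := by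
        rw [aeval_def, ← Polynomial.eval_map]; exact hz
      have hdvd : minpoly ℤ z ∣ q := minpoly.isIntegrallyClosed_dvd hzint haevz
      obtain ⟨c, hc⟩ := hdvd
      have hmz : (minpoly ℤ z).Monic := minpoly.monic hzint
      have hcm : c.Monic := hmz.of_mul_monic_left (hc ▸ hq)
      have hdeg_add : (minpoly ℤ z).natDegree + c.natDegree = n := by
        rw [← hqn, hc, natDegree_mul hmz.ne_zero hcm.ne_zero]
      have hminQZ : (minpoly ℚ z).natDegree = (minpoly ℤ z).natDegree := by
        rw [minpoly.isIntegrallyClosed_eq_field_fractions' (K := ℚ) hzint]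
        exact hmz.natDegree_map _
      have heven1 : Even (minpoly ℚ z).natDegree := by
        rw [hjj]
        exact crux g hg hdeg hconst lam hroots habs jj (hjj ▸ habs1)
      have hcprop : ∀ y ∈ (c.map (Int.castRingHom ℂ)).roots,
          ‖y‖ ≠ 1 ∧ ∃ j : Fin i → Fin 4, y = ∏ t, lam (j t) := by
        intro y hy
        apply hprop
        have hqsplit : q.map (Int.castRingHom ℂ)
            = (minpoly ℤ z).map (Int.castRingHom ℂ) * c.map (Int.castRingHom ℂ) := by
          rw [hc, Polynomial.map_mul]
        rw [hqsplit, roots_mul (by rw [← hqsplit]; exact hqmne)]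
        exact Multiset.mem_add.mpr (Or.inr hy)
      have hmindeg_pos : 0 < (minpoly ℤ z).natDegree := by
        rw [← hminQZ]
        exact minpoly.natDegree_pos (hzint.tower_top (A := ℚ))
      have hcn : c.natDegree < n := by omega
      have heven2 : Even c.natDegree := IH c.natDegree hcn c rfl hcm hcprop
      have heven1' : Even (minpoly ℤ z).natDegree := hminQZ ▸ heven1
      obtain ⟨u, hu⟩ := heven1'
      obtain ⟨w, hw⟩ := heven2
      exact ⟨u + w, by omega⟩
end crux



open Polynomial

/-- Let `g` be an Anosov polynomial of degree 4 with roots `lam 0, …, lam 3`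
and let `i ≥ 2`. Then every `i`-fold product of roots of `g` that is an algebraic unit of
absolute value ≠ 1 has minimal polynomial over ℚ of even degree; consequently, any monic
integer polynomial all of whose roots are such `i`-fold products has even degree. -/
theorem stmt14 (g : Polynomial ℤ) (hg : g.Monic) (hdeg : g.natDegree = 4)
    (hconst : g.coeff 0 = 1 ∨ g.coeff 0 = -1)
    (lam : Fin 4 → ℂ)
    (hroots : (g.map (Int.castRingHom ℂ)).roots = Multiset.map lam Finset.univ.val)
    (habs : ∀ i, ‖lam i‖ ≠ 1)
    (i : ℕ) (hi : 2 ≤ i) :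
    (∀ j : Fin i → Fin 4,
      IsIntegral ℤ (∏ t, lam (j t)) → IsIntegral ℤ (∏ t, lam (j t))⁻¹ →
      ‖∏ t, lam (j t)‖ ≠ 1 →
      Even (minpoly ℚ (∏ t, lam (j t))).natDegree) ∧
    (∀ q : Polynomial ℤ, q.Monic →
      (∀ z ∈ (q.map (Int.castRingHom ℂ)).roots,
        ‖z‖ ≠ 1 ∧ ∃ j : Fin i → Fin 4, z = ∏ t, lam (j t)) →
      Even q.natDegree) := by
  constructor
  · intro j _ _ hne
    exact crux g hg hdeg hconst lam hroots habs j hne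
  · intro q hq hprop
    exact part2_aux g hg hdeg hconst lam hroots habs i q.natDegree q rfl hq hprop
end

section
/- Let f = g·h be a product of two irreducible polynomials over ℚ with deg g = p prime and deg h = n, where p does not divide n. Then for any root λ of h there exists an element of the Galois group of the splitting field of f over ℚ that fixes λ but fixes no root of g. -/
open Polynomial

lemma trans_aux (f q : ℚ[X]) (hq : Irreducible q)
    [Fact ((q.map (algebraMap ℚ f.SplittingField)).Splits)]
    (x y : q.rootSet f.SplittingField) :
    ∃ σ : f.Gal, σ (x : f.SplittingField) = (y : f.SplittingField) := by
  haveI := Gal.galAction_isPretransitive q f.SplittingField hq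
  obtain ⟨τ, hτ⟩ := MulAction.exists_smul_eq q.Gal x y
  haveI : Normal ℚ f.SplittingField := Polynomial.SplittingField.instNormal f
  obtain ⟨σ, hσ⟩ := Gal.restrict_surjective q f.SplittingField τ
  refine ⟨σ, ?_⟩
  have := Gal.restrict_smul (p := q) (E := f.SplittingField) σ x
  rw [hσ, hτ] at this
  exact this.symm

/-- Let `f = g * h` with `g, h` irreducible over ℚ, `deg g = p` prime and
`deg h = n` with `p ∤ n`. Then for any root `lam` of `h` in the splitting field of `f`
there is an element of the Galois group of `f` fixing `lam` but fixing no root of `g`. -/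
theorem stmt15 (g h : Polynomial ℚ) (hg : Irreducible g) (hh : Irreducible h)
    (p n : ℕ) (hp : p.Prime) (hgdeg : g.natDegree = p) (hhdeg : h.natDegree = n)
    (hpn : ¬ p ∣ n)
    (lam : (g * h).SplittingField) (hlam : Polynomial.aeval lam h = 0) :
    ∃ σ : (g * h).Gal, σ lam = lam ∧
      ∀ ν : (g * h).SplittingField, Polynomial.aeval ν g = 0 → σ ν ≠ ν := by
  classical
  haveI : Fact p.Prime := ⟨hp⟩
  revert hlam
  revert lam
  set f := g * h with hf
  set E := f.SplittingField with hE
  intro lam hlam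
  have hg0 : g ≠ 0 := hg.ne_zero
  have hh0 : h ≠ 0 := hh.ne_zero
  have hf0 : f ≠ 0 := mul_ne_zero hg0 hh0
  have hn0 : n ≠ 0 := fun h0 => hpn (h0 ▸ dvd_zero p)
  have hsf : (f.map (algebraMap ℚ E)).Splits := SplittingField.splits f
  haveI factg : Fact ((g.map (algebraMap ℚ E)).Splits) :=
    ⟨hsf.of_dvd (Polynomial.map_ne_zero hf0) (Polynomial.map_dvd _ (dvd_mul_right g h))⟩
  haveI facth : Fact ((h.map (algebraMap ℚ E)).Splits) :=
    ⟨hsf.of_dvd (Polynomial.map_ne_zero hf0) (Polynomial.map_dvd _ (dvd_mul_left h g))⟩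
  -- roots of a polynomial are mapped to roots
  have hroot : ∀ (q : ℚ[X]) (σ : f.Gal) (x : E), aeval x q = 0 → aeval (σ x) q = 0 := by
    intro q σ x hx
    have h1 : aeval (σ x) q = σ (aeval x q) := aeval_algHom_apply (AlgEquiv.toAlgHom σ) x q
    rw [h1, hx, map_zero]
  -- cardinalities of root sets
  have cardRg : Nat.card (g.rootSet E) = p := by
    rw [Nat.card_eq_fintype_card, card_rootSet_eq_natDegree hg.separable factg.out, hgdeg]
  have cardRh : Nat.card (h.rootSet E) = n := by
    rw [Nat.card_eq_fintype_card, card_rootSet_eq_natDegree hh.separable facth.out, hhdeg]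
  -- orbits
  have horb : ∀ (q : ℚ[X]), Irreducible q → ∀ (hq : Fact ((q.map (algebraMap ℚ E)).Splits)) (x : E),
      aeval x q = 0 → MulAction.orbit f.Gal x = q.rootSet E := by
    intro q hq hqs x hx
    ext y
    constructor
    · rintro ⟨σ, rfl⟩
      exact mem_rootSet.mpr ⟨hq.ne_zero, hroot q σ x hx⟩
    · intro hy
      obtain ⟨σ, hσ⟩ := trans_aux f q hq ⟨x, mem_rootSet.mpr ⟨hq.ne_zero, hx⟩⟩ ⟨y, hy⟩
      exact ⟨σ, hσ⟩
  -- orbit stabilizer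
  have cardG0 : Nat.card f.Gal ≠ 0 := Nat.card_pos.ne'
  have ostab : ∀ (q : ℚ[X]), Irreducible q → ∀ (hq : Fact ((q.map (algebraMap ℚ E)).Splits)) (x : E),
      aeval x q = 0 →
      Nat.card (q.rootSet E) * Nat.card (MulAction.stabilizer f.Gal x) = Nat.card f.Gal := by
    intro q hq hqs x hx
    haveI : Fintype ↑(MulAction.orbit f.Gal x) := Set.fintypeRange _
    have := MulAction.card_orbit_mul_card_stabilizer_eq_card_group f.Gal x
    rw [← Nat.card_eq_fintype_card, ← Nat.card_eq_fintype_card, ← Nat.card_eq_fintype_card] at this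
    rw [← this, horb q hq hqs x hx]
  -- stabilizer of lam
  set H := MulAction.stabilizer f.Gal lam with hHdef
  have cardGH : n * Nat.card H = Nat.card f.Gal := by
    have := ostab h hh facth lam hlam
    rwa [cardRh] at this
  set k := (Nat.card f.Gal).factorization p with hk
  have cardH0 : Nat.card H ≠ 0 := Nat.card_pos.ne'
  have hkH : (Nat.card H).factorization p = k := by
    rw [hk, ← cardGH, Nat.factorization_mul hn0 cardH0, Finsupp.add_apply,
      Nat.factorization_eq_zero_of_not_dvd hpn, zero_add]
  obtain ⟨P⟩ : Nonempty (Sylow p H) := inferInstance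
  set P' : Subgroup f.Gal := P.1.map H.subtype with hP'
  have cardP' : Nat.card P' = p ^ k := by
    have e1 : Nat.card P' = Nat.card P.1 :=
      (Nat.card_congr (Subgroup.equivMapOfInjective P.1 H.subtype
        (Subgroup.subtype_injective H)).toEquiv).symm
    rw [e1, ← hkH]
    exact Sylow.card_eq_multiplicity P
  -- a root of g exists
  have hx0 : ∃ μ : E, aeval μ g = 0 := by
    have hpos : 0 < Nat.card (g.rootSet E) := by rw [cardRg]; exact hp.pos
    obtain ⟨⟨μ, hμ⟩⟩ := Nat.card_pos_iff.mp hpos |>.1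
    exact ⟨μ, (mem_rootSet.mp hμ).2⟩
  obtain ⟨μ0, hμ0⟩ := hx0
  have hk1 : 1 ≤ k := by
    have h1 := ostab g hg factg μ0 hμ0
    rw [cardRg] at h1
    have hdvd : p ∣ Nat.card f.Gal := ⟨_, h1.symm⟩
    exact Nat.Prime.factorization_pos_of_dvd hp cardG0 hdvd
  -- no root of g is fixed by all of P'
  have step10 : ∀ μ : E, aeval μ g = 0 → ∃ σ ∈ P', σ μ ≠ μ := by
    intro μ hμ
    by_contra hcon
    push_neg at hcon
    have hle : P' ≤ MulAction.stabilizer f.Gal μ := by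
      intro σ hσ
      exact hcon σ hσ
    have hdvd : Nat.card P' ∣ Nat.card (MulAction.stabilizer f.Gal μ) :=
      Subgroup.card_dvd_of_le hle
    have hcard : p * Nat.card (MulAction.stabilizer f.Gal μ) = Nat.card f.Gal := by
      have h1 := ostab g hg factg μ hμ; rwa [cardRg] at h1
    have hdd : p ^ (k + 1) ∣ Nat.card f.Gal := by
      rw [← hcard, pow_succ']
      exact mul_dvd_mul_left p (cardP' ▸ hdvd)
    have := (Nat.Prime.pow_dvd_iff_le_factorization hp cardG0).mp hdd
    omega
  -- the permutation representation on roots of g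
  set ψ : f.Gal →* Equiv.Perm (g.rootSet E) :=
    (Gal.galActionHom g E).comp (Gal.restrict g E) with hψdef
  have hψ : ∀ (σ : f.Gal) (x : g.rootSet E), (ψ σ x : E) = σ (x : E) := fun σ x => by
    exact @Gal.galActionHom_restrict ℚ _ g E _ _ factg σ x
  set Q : Subgroup (Equiv.Perm (g.rootSet E)) := P'.map ψ with hQdef
  have pgQ : IsPGroup p Q := (P.isPGroup'.map H.subtype).map ψ
  obtain ⟨m, hm⟩ := IsPGroup.iff_card.mp pgQ
  obtain ⟨σ0, hσ0P, hσ0⟩ := step10 μ0 hμ0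
  have hσ0Q : ψ σ0 ∈ Q := Subgroup.mem_map_of_mem ψ hσ0P
  have hψσ0ne : ψ σ0 ≠ 1 := by
    intro h1
    apply hσ0
    have h2 := hψ σ0 ⟨μ0, mem_rootSet.mpr ⟨hg0, hμ0⟩⟩
    rw [h1] at h2
    simpa using h2.symm
  have cardPerm : Nat.card (Equiv.Perm (g.rootSet E)) = Nat.factorial p := by
    rw [Nat.card_eq_fintype_card, Fintype.card_perm, ← Nat.card_eq_fintype_card, cardRg]
  have hm1 : m ≤ 1 := by
    by_contra hm2
    push_neg at hm2
    have h1 : p ^ m ∣ Nat.factorial p := by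
      rw [← hm, ← cardPerm]; exact Subgroup.card_subgroup_dvd_card Q
    have h2' : p ^ 2 ∣ Nat.factorial p := (pow_dvd_pow p hm2).trans h1
    rw [pow_two] at h2'
    rw [show Nat.factorial p = p * Nat.factorial (p - 1) by
      obtain ⟨t, ht⟩ := Nat.exists_eq_succ_of_ne_zero hp.pos.ne'
      subst ht
      simp [Nat.factorial_succ]] at h2'
    have h3 : p ∣ Nat.factorial (p - 1) := (Nat.mul_dvd_mul_iff_left hp.pos).mp h2'
    have h4 := (Nat.Prime.dvd_factorial hp).mp h3
    have h5 := hp.two_le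
    omega
  have hm0 : m ≠ 0 := by
    intro h0
    rw [h0, pow_zero] at hm
    have hbot : Q = ⊥ := Subgroup.card_eq_one.mp hm
    rw [hbot] at hσ0Q
    exact hψσ0ne (Subgroup.mem_bot.mp hσ0Q)
  have cardQ : Nat.card Q = p := by
    rw [hm, show m = 1 by omega, pow_one]
  have hzle : Subgroup.zpowers (ψ σ0) ≤ Q := Subgroup.zpowers_le.mpr hσ0Q
  have hzcard : Nat.card (Subgroup.zpowers (ψ σ0)) = p := by
    have hdvd : Nat.card (Subgroup.zpowers (ψ σ0)) ∣ p := cardQ ▸ Subgroup.card_dvd_of_le hzle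
    have hne1 : Nat.card (Subgroup.zpowers (ψ σ0)) ≠ 1 := by
      intro h1
      exact hψσ0ne (Subgroup.zpowers_eq_bot.mp (Subgroup.card_eq_one.mp h1))
    rcases (Nat.dvd_prime hp).mp hdvd with h1 | h1
    · exact absurd h1 hne1
    · exact h1
  have hQz : Subgroup.zpowers (ψ σ0) = Q :=
    Subgroup.eq_of_le_of_card_ge hzle (by rw [cardQ, hzcard])
  -- σ0 fixes lam
  obtain ⟨σ0', hσ0'P, hσ0'e⟩ := Subgroup.mem_map.mp hσ0P
  have hfix : σ0 lam = lam := by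
    rw [← hσ0'e]
    exact σ0'.2
  refine ⟨σ0, hfix, ?_⟩
  intro ν hν hfixν
  obtain ⟨τ, hτP, hτ⟩ := step10 ν hν
  have hνmem : ν ∈ g.rootSet E := mem_rootSet.mpr ⟨hg0, hν⟩
  have hτQ : ψ τ ∈ Q := Subgroup.mem_map_of_mem ψ hτP
  rw [← hQz] at hτQ
  obtain ⟨i, hi⟩ := Subgroup.mem_zpowers_iff.mp hτQ
  have hfix1 : ψ σ0 ⟨ν, hνmem⟩ = ⟨ν, hνmem⟩ := by
    apply Subtype.ext
    rw [hψ σ0 ⟨ν, hνmem⟩]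
    exact hfixν
  have hfix2 : ψ τ ⟨ν, hνmem⟩ = ⟨ν, hνmem⟩ := by
    rw [← hi]
    exact Function.IsFixedPt.perm_zpow hfix1 i
  apply hτ
  have h5 := hψ τ ⟨ν, hνmem⟩
  rw [hfix2] at h5
  exact h5.symm
end
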